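/- arXiv:1401.2744 — 3 statements merged into one kernel-verified Lean document; each statement's English description precedes it below -/
import Mathlib

section
/- For every real t in [0,b] with b>0 and every ω≥1, there is a constant C (depending only on m and b) such that |∫₀ᵗ J_m(ωx) dx| ≤ C/ω, where J_m is the Bessel function of the first kind of order m≥0. -/
open MeasureTheory intervalIntegral Real Set Polynomial

/-- Bessel function of the first kind of real order `m`, via its power series. -/
noncomputable def besselJ (m x : ℝ) : ℝ :=
  ∑' k : ℕ, (-1 : ℝ) ^ k * (x / 2) ^ (m + 2 * (k : ℝ)) /
    ((k.factorial : ℝ) * Real.Gamma (m + (k : ℝ) + 1))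
lemma Gamma_lb {y : ℝ} (hy : 1 ≤ y) : Real.exp (-1) ≤ Real.Gamma y := by
  rw [Real.Gamma_eq_integral (by linarith : (0:ℝ) < y)]
  have h1 : IntegrableOn (fun x => Real.exp (-x) * x ^ (y - 1)) (Ioi (0:ℝ)) := by
    have := Real.GammaIntegral_convergent (by linarith : (0:ℝ) < y)
    exact this
  calc Real.exp (-1) = ∫ x in Ioi (1:ℝ), Real.exp (-x) := (integral_exp_neg_Ioi 1).symm
    _ ≤ ∫ x in Ioi (1:ℝ), Real.exp (-x) * x ^ (y - 1) := by
        apply setIntegral_mono_on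
        · exact (exp_neg_integrableOn_Ioi 1 one_pos).congr_fun (fun x hx => by norm_num) measurableSet_Ioi
        · exact h1.mono_set (Ioi_subset_Ioi one_pos.le)
        · exact measurableSet_Ioi
        · intro x hx
          nth_rewrite 1 [← mul_one (Real.exp (-x))]
          gcongr
          exact Real.one_le_rpow (le_of_lt hx) (by linarith)
    _ ≤ ∫ x in Ioi (0:ℝ), Real.exp (-x) * x ^ (y - 1) := by
        apply setIntegral_mono_set h1
        · filter_upwards [ae_restrict_mem measurableSet_Ioi] with x hx
          exact mul_nonneg (Real.exp_pos _).le (Real.rpow_nonneg hx.le _)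
        · exact HasSubset.Subset.eventuallyLE (Ioi_subset_Ioi one_pos.le)

noncomputable def bc (μ : ℝ) (k : ℕ) : ℝ := (-1)^k / (k.factorial * Real.Gamma (μ + k + 1))
noncomputable def bF (μ y : ℝ) : ℝ := ∑' k, bc μ k * y^k

lemma Gamma_arg_pos {μ : ℝ} (hμ : 0 ≤ μ) (k : ℕ) : 0 < Real.Gamma (μ + k + 1) :=
  Real.Gamma_pos_of_pos (by positivity)

lemma bc_abs {μ : ℝ} (hμ : 0 ≤ μ) (k : ℕ) : |bc μ k| ≤ Real.exp 1 / k.factorial := by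
  have hΓ : Real.exp (-1) ≤ Real.Gamma (μ + k + 1) :=
    Gamma_lb (by have := Nat.cast_nonneg (α := ℝ) k; linarith)
  have hΓ0 := Gamma_arg_pos hμ k
  have hk : (0:ℝ) < k.factorial := by positivity
  have hinv : Real.exp 1 * Real.exp (-1) = 1 := by rw [← Real.exp_add]; norm_num
  rw [bc, abs_div, abs_pow, abs_neg, abs_one, one_pow, abs_mul,
    abs_of_pos hk, abs_of_pos hΓ0]
  rw [div_le_div_iff₀ (by positivity) hk]
  nlinarith [mul_le_mul_of_nonneg_left hΓ
    (by positivity : (0:ℝ) ≤ Real.exp 1 * k.factorial), Real.exp_pos 1]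

lemma bc_norm_term {μ : ℝ} (hμ : 0 ≤ μ) (k : ℕ) (y : ℝ) :
    ‖bc μ k * y^k‖ ≤ Real.exp 1 * (|y|^k / k.factorial) := by
  rw [norm_mul, norm_pow, Real.norm_eq_abs, Real.norm_eq_abs]
  calc |bc μ k| * |y|^k ≤ Real.exp 1 / k.factorial * |y|^k := by
        gcongr; exact bc_abs hμ k
    _ = Real.exp 1 * (|y|^k / k.factorial) := by ring

lemma summable_bc {μ : ℝ} (hμ : 0 ≤ μ) (y : ℝ) : Summable fun k => bc μ k * y^k :=
  Summable.of_norm_bounded ((Real.summable_pow_div_factorial |y|).mul_left _)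
    (bc_norm_term hμ · y)

lemma summable_deriv_bound (R : ℝ) :
    Summable fun k : ℕ => Real.exp 1 / k.factorial * (k * R^(k-1)) := by
  rw [← summable_nat_add_iff 1]
  have : (fun k : ℕ => Real.exp 1 / (k+1).factorial * ((↑(k+1)) * R^(k+1-1)))
      = fun k : ℕ => Real.exp 1 * (R^k / k.factorial) := by
    funext k
    have h1 : ((k+1).factorial : ℝ) = (k+1) * k.factorial := by
      rw [Nat.factorial_succ]; push_cast; ring
    have hk : (0:ℝ) < k.factorial := by positivity
    rw [h1]
    push_cast
    field_simp
  rw [this]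
  exact (Real.summable_pow_div_factorial R).mul_left _

lemma bc_succ {μ : ℝ} (hμ : 0 ≤ μ) (k : ℕ) : bc μ (k+1) * (k+1) = - bc (μ+1) k := by
  have h1 : ((k+1).factorial : ℝ) = (k+1) * k.factorial := by
    rw [Nat.factorial_succ]; push_cast; ring
  have harg : μ + (↑(k+1) : ℝ) + 1 = (μ+1) + k + 1 := by push_cast; ring
  have hΓ0 : Real.Gamma ((μ+1) + k + 1) ≠ 0 := (Gamma_arg_pos (by linarith) k).ne'
  have hf : (k.factorial : ℝ) ≠ 0 := by positivity
  have hk : ((k:ℝ) + 1) ≠ 0 := by positivity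
  rw [bc, bc, harg, h1]
  rw [pow_succ]
  field_simp

lemma summable_deriv {μ : ℝ} (hμ : 0 ≤ μ) (y : ℝ) :
    Summable fun k : ℕ => bc μ k * (k * y^(k-1)) := by
  apply Summable.of_norm_bounded (summable_deriv_bound (|y|))
  intro k
  rw [norm_mul, norm_mul, Real.norm_eq_abs, Real.norm_eq_abs, Real.norm_eq_abs, abs_pow]
  have h1 : |bc μ k| ≤ Real.exp 1 / k.factorial := bc_abs hμ k
  have h2 : |(k:ℝ)| = (k:ℝ) := abs_of_nonneg (Nat.cast_nonneg k)
  rw [h2]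
  exact mul_le_mul_of_nonneg_right h1 (by positivity)

lemma bF_hasDerivAt {μ : ℝ} (hμ : 0 ≤ μ) (y : ℝ) :
    HasDerivAt (bF μ) (-(bF (μ+1) y)) y := by
  set R := |y| + 1 with hR
  have hyR : y ∈ Ioo (-R) R := by
    constructor <;> [nlinarith [abs_nonneg y, neg_abs_le y, le_abs_self y];
      nlinarith [le_abs_self y]]
  have key := hasDerivAt_tsum_of_isPreconnected
    (u := fun k : ℕ => Real.exp 1 / k.factorial * (k * R^(k-1)))
    (g := fun (k : ℕ) (z : ℝ) => bc μ k * z^k)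
    (g' := fun (k : ℕ) (z : ℝ) => bc μ k * (k * z^(k-1)))
    (summable_deriv_bound R) isOpen_Ioo (convex_Ioo _ _).isPreconnected
    (fun k z _ => (hasDerivAt_pow k z).const_mul _)
    (fun k z hz => by
      rw [norm_mul, norm_mul, Real.norm_eq_abs, Real.norm_eq_abs, Real.norm_eq_abs, abs_pow]
      have h2 : |(k:ℝ)| = (k:ℝ) := abs_of_nonneg (Nat.cast_nonneg k)
      rw [h2]
      have hz1 : |z| ≤ R := by
        rcases hz with ⟨h1, h2⟩; rw [abs_le]; constructor <;> linarith
      exact mul_le_mul (bc_abs hμ k)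
        (mul_le_mul_of_nonneg_left (pow_le_pow_left₀ (abs_nonneg z) hz1 _) (Nat.cast_nonneg k))
        (by positivity) (by positivity))
    hyR (summable_bc hμ y) hyR
  have heq : ∑' k : ℕ, bc μ k * (k * y^(k-1)) = -(bF (μ+1) y) := by
    rw [Summable.tsum_eq_zero_add (summable_deriv hμ y)]
    simp only [Nat.cast_zero, zero_mul, mul_zero, zero_add]
    rw [bF, ← tsum_neg]
    apply tsum_congr
    intro k
    have : bc μ (k+1) * (↑(k+1) * y^(k+1-1)) = (bc μ (k+1) * (k+1)) * y^k := by
      push_cast; ring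
    rw [this, bc_succ hμ]
    ring
  rw [heq] at key
  exact key

lemma bc_rec {μ : ℝ} (hμ : 0 ≤ μ) (k : ℕ) :
    (μ+1) * bc (μ+1) (k+1) - bc μ (k+1) = bc (μ+2) k := by
  have h1 : ((k+1).factorial : ℝ) = (k+1) * k.factorial := by
    rw [Nat.factorial_succ]; push_cast; ring
  have harg1 : (μ+1) + (↑(k+1) : ℝ) + 1 = (μ + ↑(k+1) + 1) + 1 := by push_cast; ring
  have harg2 : (μ+2) + (k : ℝ) + 1 = (μ + ↑(k+1) + 1) + 1 := by push_cast; ring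
  have hpos : (0:ℝ) < μ + ↑(k+1) + 1 := by positivity
  have hrec : Real.Gamma ((μ + ↑(k+1) + 1) + 1) = (μ + ↑(k+1) + 1) * Real.Gamma (μ + ↑(k+1) + 1) :=
    Real.Gamma_add_one hpos.ne'
  have hΓ0 : Real.Gamma (μ + ↑(k+1) + 1) ≠ 0 := (Real.Gamma_pos_of_pos hpos).ne'
  have hf : (k.factorial : ℝ) ≠ 0 := by positivity
  have hk : ((k:ℝ) + 1) ≠ 0 := by positivity
  rw [bc, bc, bc, harg1, harg2, hrec, h1, pow_succ]
  have hc : (↑(k+1) : ℝ) = (k:ℝ) + 1 := by push_cast; ring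
  rw [hc]
  field_simp
  ring

lemma bc_rec0 {μ : ℝ} (hμ : 0 ≤ μ) :
    (μ+1) * bc (μ+1) 0 - bc μ 0 = 0 := by
  have hpos : (0:ℝ) < μ + 1 := by positivity
  have hrec : Real.Gamma ((μ+1) + 1) = (μ+1) * Real.Gamma (μ+1) := Real.Gamma_add_one hpos.ne'
  have hΓ0 : Real.Gamma (μ + 1) ≠ 0 := (Real.Gamma_pos_of_pos hpos).ne'
  simp only [bc, Nat.cast_zero, add_zero, Nat.factorial_zero, Nat.cast_one, one_mul, pow_zero]
  rw [hrec]
  field_simp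
  ring

lemma bF_rec {μ : ℝ} (hμ : 0 ≤ μ) (y : ℝ) :
    bF μ y + y * bF (μ+2) y = (μ+1) * bF (μ+1) y := by
  have hs1 := summable_bc hμ y
  have hs2 := summable_bc (by linarith : (0:ℝ) ≤ μ+1) y
  have hs3 := summable_bc (by linarith : (0:ℝ) ≤ μ+2) y
  have key : (μ+1) * bF (μ+1) y - bF μ y = y * bF (μ+2) y := by
    have e1 : (μ+1) * bF (μ+1) y = ∑' k, (μ+1) * (bc (μ+1) k * y^k) := by
      rw [bF, tsum_mul_left]
    have e2 : (μ+1) * bF (μ+1) y - bF μ y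
        = ∑' k, ((μ+1) * (bc (μ+1) k * y^k) - bc μ k * y^k) := by
      rw [e1, bF, ← Summable.tsum_sub (hs2.mul_left _) hs1]
    rw [e2]
    have hsum : Summable fun k => (μ+1) * (bc (μ+1) k * y^k) - bc μ k * y^k :=
      (hs2.mul_left _).sub hs1
    rw [Summable.tsum_eq_zero_add hsum]
    have h0 : (μ+1) * (bc (μ+1) 0 * y^0) - bc μ 0 * y^0 = 0 := by
      have := bc_rec0 hμ; nlinarith [this]
    rw [h0, zero_add]
    have hterm : ∀ k : ℕ, (μ+1) * (bc (μ+1) (k+1) * y^(k+1)) - bc μ (k+1) * y^(k+1)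
        = y * (bc (μ+2) k * y^k) := by
      intro k
      have := bc_rec hμ k
      calc (μ+1) * (bc (μ+1) (k+1) * y^(k+1)) - bc μ (k+1) * y^(k+1)
          = ((μ+1) * bc (μ+1) (k+1) - bc μ (k+1)) * y^(k+1) := by ring
        _ = bc (μ+2) k * y^(k+1) := by rw [this]
        _ = y * (bc (μ+2) k * y^k) := by rw [pow_succ]; ring
    simp_rw [hterm]
    rw [tsum_mul_left, bF]
  linarith [key]

lemma besselJ_eq {μ : ℝ} (hμ : 0 ≤ μ) {x : ℝ} (hx : 0 < x) :
    besselJ μ x = (x/2)^μ * bF μ (x^2/4) := by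
  have hx2 : (0:ℝ) < x/2 := by linarith
  rw [besselJ, bF, ← tsum_mul_left]
  apply tsum_congr
  intro k
  have h1 : (x/2) ^ (μ + 2*(k:ℝ)) = (x/2)^μ * (x^2/4)^k := by
    rw [Real.rpow_add hx2]
    congr 1
    have : (2*(k:ℝ)) = ((2*k : ℕ) : ℝ) := by push_cast; ring
    rw [this, Real.rpow_natCast, pow_mul]
    congr 1
    ring
  rw [h1, bc]
  ring

noncomputable def Mb : ℝ := ∑' k : ℕ, Real.exp 1 / k.factorial

lemma summable_Mb : Summable fun k : ℕ => Real.exp 1 / k.factorial := by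
  have := (Real.summable_pow_div_factorial 1).mul_left (Real.exp 1)
  apply this.congr
  intro k
  simp [div_eq_mul_inv]

lemma besselJ_bound1 {μ : ℝ} (hμ : 0 ≤ μ) {x : ℝ} (hx0 : 0 ≤ x) (hx1 : x ≤ 2) :
    |besselJ μ x| ≤ Mb := by
  rw [besselJ, ← Real.norm_eq_abs]
  apply tsum_of_norm_bounded summable_Mb.hasSum
  intro k
  rw [Real.norm_eq_abs, abs_div, abs_mul, abs_pow, abs_neg, abs_one, one_pow, one_mul]
  have hΓ : Real.exp (-1) ≤ Real.Gamma (μ + k + 1) :=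
    Gamma_lb (by have := Nat.cast_nonneg (α := ℝ) k; linarith)
  have hΓ0 := Gamma_arg_pos hμ k
  have hk : (0:ℝ) < k.factorial := by positivity
  have habs : |(x/2) ^ (μ + 2*(k:ℝ))| ≤ 1 := by
    rw [abs_of_nonneg (Real.rpow_nonneg (by linarith) _)]
    apply Real.rpow_le_one (by linarith) (by linarith)
    have := Nat.cast_nonneg (α := ℝ) k; linarith
  have hb : |(k.factorial : ℝ) * Real.Gamma (μ + k + 1)| = k.factorial * Real.Gamma (μ+k+1) := by
    rw [abs_mul, abs_of_pos hk, abs_of_pos hΓ0]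
  rw [hb]
  have hinv : Real.exp 1 * Real.exp (-1) = 1 := by rw [← Real.exp_add]; norm_num
  rw [div_le_div_iff₀ (by positivity) hk]
  nlinarith [mul_le_mul_of_nonneg_left hΓ
    (by positivity : (0:ℝ) ≤ Real.exp 1 * k.factorial), Real.exp_pos 1,
    mul_le_mul_of_nonneg_right habs (le_of_lt hk)]

lemma besselJ_hasDeriv {μ : ℝ} (hμ : 0 ≤ μ) {x : ℝ} (hx : 0 < x) :
    HasDerivAt (besselJ μ) (μ/x * besselJ μ x - besselJ (μ+1) x) x := by
  have hx2 : (0:ℝ) < x/2 := by linarith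
  have h1 : HasDerivAt (fun y : ℝ => (y/2)^μ) (μ * (x/2)^(μ-1) * (1/2)) x := by
    have ha : HasDerivAt (fun y : ℝ => y/2) (1/2 : ℝ) x := by
      simpa using (hasDerivAt_id x).div_const 2
    have hb := Real.hasDerivAt_rpow_const (x := x/2) (p := μ) (Or.inl hx2.ne')
    exact hb.comp x ha
  have h2 : HasDerivAt (fun y : ℝ => bF μ (y^2/4)) (-(bF (μ+1) (x^2/4)) * (x/2)) x := by
    have ha : HasDerivAt (fun y : ℝ => y^2/4) (x/2 : ℝ) x := by
      have := (hasDerivAt_pow 2 x).div_const 4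
      refine this.congr_deriv (Eq.symm ?_)
      push_cast; ring
    exact (bF_hasDerivAt hμ (x^2/4)).comp x ha
  have hprod := h1.mul h2
  have heq : besselJ μ =ᶠ[nhds x] fun y => (y/2)^μ * bF μ (y^2/4) := by
    filter_upwards [isOpen_Ioi.eventually_mem hx] with y hy
    exact besselJ_eq hμ hy
  have key := hprod.congr_of_eventuallyEq heq
  refine key.congr_deriv (Eq.symm ?_)
  have e1 : (x/2)^μ = (x/2)^(μ-1) * (x/2) := by
    rw [← Real.rpow_add_one hx2.ne']; ring_nf
  have e2 : (x/2)^(μ+1) = (x/2)^μ * (x/2) := by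
    rw [← Real.rpow_add_one hx2.ne']
  rw [besselJ_eq hμ hx, besselJ_eq (by linarith : (0:ℝ) ≤ μ+1) hx, e2, e1]
  field_simp
  ring

lemma besselJ_rec {m : ℝ} (hm : 0 ≤ m) {x : ℝ} (hx : 0 < x) :
    besselJ m x + besselJ (m+2) x = (2*(m+1)/x) * besselJ (m+1) x := by
  have hx2 : (0:ℝ) < x/2 := by linarith
  have hrec := bF_rec hm (x^2/4)
  rw [besselJ_eq hm hx, besselJ_eq (by linarith : (0:ℝ) ≤ m+2) hx,
    besselJ_eq (by linarith : (0:ℝ) ≤ m+1) hx]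
  have e2 : (x/2)^(m+2) = (x/2)^m * (x^2/4) := by
    rw [show m + 2 = m + (2:ℕ) by push_cast; ring, Real.rpow_add hx2, Real.rpow_natCast]
    congr 1
    ring
  have e1 : (x/2)^(m+1) = (x/2)^m * (x/2) := by
    rw [← Real.rpow_add_one hx2.ne']
  rw [e1, e2]
  have hrw : (2*(m+1)/x) * ((x/2)^m * (x/2) * bF (m+1) (x^2/4))
      = (m+1) * ((x/2)^m * bF (m+1) (x^2/4)) := by
    field_simp
  rw [hrw]
  linear_combination ((x/2:ℝ)^m) * hrec

lemma besselJ1_hasDeriv {m : ℝ} (hm : 0 ≤ m) {x : ℝ} (hx : 0 < x) :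
    HasDerivAt (besselJ (m+1)) (besselJ m x - (m+1)/x * besselJ (m+1) x) x := by
  have h := besselJ_hasDeriv (by linarith : (0:ℝ) ≤ m+1) hx
  have hrec := besselJ_rec hm hx
  have harg : m + 1 + 1 = m + 2 := by ring
  rw [harg] at h
  convert h using 1
  have hx0 : x ≠ 0 := hx.ne'
  field_simp at hrec ⊢
  linarith [hrec]


section energy

variable {m : ℝ}

lemma u_hasDeriv (hm : 0 ≤ m) {x : ℝ} (hx : 0 < x) :
    HasDerivAt (fun y => Real.sqrt y * besselJ m y)
      ((m+1/2)/x * (Real.sqrt x * besselJ m x) - Real.sqrt x * besselJ (m+1) x) x := by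
  have hs := (Real.hasDerivAt_sqrt hx.ne').mul (besselJ_hasDeriv hm hx)
  refine hs.congr_deriv (Eq.symm ?_)
  obtain ⟨s, hs0, rfl⟩ : ∃ s : ℝ, 0 < s ∧ x = s^2 :=
    ⟨Real.sqrt x, Real.sqrt_pos.mpr hx, (Real.sq_sqrt hx.le).symm⟩
  rw [Real.sqrt_sq hs0.le]
  field_simp
  ring

lemma v_hasDeriv (hm : 0 ≤ m) {x : ℝ} (hx : 0 < x) :
    HasDerivAt (fun y => Real.sqrt y * besselJ (m+1) y)
      (Real.sqrt x * besselJ m x - (m+1/2)/x * (Real.sqrt x * besselJ (m+1) x)) x := by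
  have hs := (Real.hasDerivAt_sqrt hx.ne').mul (besselJ1_hasDeriv hm hx)
  refine hs.congr_deriv (Eq.symm ?_)
  obtain ⟨s, hs0, rfl⟩ : ∃ s : ℝ, 0 < s ∧ x = s^2 :=
    ⟨Real.sqrt x, Real.sqrt_pos.mpr hx, (Real.sq_sqrt hx.le).symm⟩
  rw [Real.sqrt_sq hs0.le]
  field_simp
  ring

/-- w = u' where u = √x J_m -/
lemma w_hasDeriv (hm : 0 ≤ m) {x : ℝ} (hx : 0 < x) :
    HasDerivAt (fun y => (m+1/2)/y * (Real.sqrt y * besselJ m y) - Real.sqrt y * besselJ (m+1) y)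
      (((m^2-1/4)/x^2 - 1) * (Real.sqrt x * besselJ m x)) x := by
  have hα : HasDerivAt (fun y : ℝ => (m+1/2)/y) (-(m+1/2)/x^2) x := by
    have h := (hasDerivAt_inv hx.ne').const_mul (m+1/2)
    have : (fun y : ℝ => (m+1/2) * y⁻¹) = fun y : ℝ => (m+1/2)/y := by
      funext y; ring
    rw [this] at h
    refine h.congr_deriv (Eq.symm ?_)
    field_simp
  have hder := (hα.mul (u_hasDeriv hm hx)).sub (v_hasDeriv hm hx)
  refine hder.congr_deriv (Eq.symm ?_)
  field_simp
  ring

lemma E_hasDeriv (hm : 0 ≤ m) {x : ℝ} (hx : 0 < x) :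
    HasDerivAt (fun y => (Real.sqrt y * besselJ m y)^2
        + ((m+1/2)/y * (Real.sqrt y * besselJ m y) - Real.sqrt y * besselJ (m+1) y)^2)
      (2 * (m^2-1/4)/x^2 * ((Real.sqrt x * besselJ m x) *
        ((m+1/2)/x * (Real.sqrt x * besselJ m x) - Real.sqrt x * besselJ (m+1) x))) x := by
  have h1 := ((u_hasDeriv hm hx).pow 2).add ((w_hasDeriv hm hx).pow 2)
  refine h1.congr_deriv (Eq.symm ?_)
  push_cast
  ring

end energy

lemma besselJ_decay {m : ℝ} (hm : 0 ≤ m) :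
    ∃ K : ℝ, 0 ≤ K ∧ ∀ x : ℝ, 1 ≤ x → |besselJ (m+1) x| ≤ K / Real.sqrt x := by
  classical
  set c : ℝ := |m^2 - 1/4| with hc
  set u : ℝ → ℝ := fun y => Real.sqrt y * besselJ m y with hu
  set w : ℝ → ℝ := fun y => (m+1/2)/y * u y - Real.sqrt y * besselJ (m+1) y with hw
  set E : ℝ → ℝ := fun y => u y^2 + w y^2 with hE
  set G : ℝ → ℝ := fun y => E y * Real.exp (c/y) with hG
  have hEderiv : ∀ x : ℝ, 0 < x → HasDerivAt E (2*(m^2-1/4)/x^2 * (u x * w x)) x := by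
    intro x hx
    exact E_hasDeriv hm hx
  have hGderiv : ∀ x : ℝ, 0 < x →
      HasDerivAt G (2*(m^2-1/4)/x^2 * (u x * w x) * Real.exp (c/x)
        + E x * (Real.exp (c/x) * (-c/x^2))) x := by
    intro x hx
    have hcx : HasDerivAt (fun y : ℝ => c/y) (-c/x^2) x := by
      have h := (hasDerivAt_inv hx.ne').const_mul c
      have e : (fun y : ℝ => c * y⁻¹) = fun y : ℝ => c/y := by
        funext y; ring
      rw [e] at h
      refine h.congr_deriv (Eq.symm ?_)
      field_simp
    have hexp := hcx.exp
    exact (hEderiv x hx).mul hexp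
  have hGnonpos : ∀ x : ℝ, 1 < x → deriv G x ≤ 0 := by
    intro x hx1
    have hx : (0:ℝ) < x := by linarith
    rw [(hGderiv x hx).deriv]
    have hexp : (0:ℝ) < Real.exp (c/x) := Real.exp_pos _
    have hkey : 2*(m^2-1/4)/x^2 * (u x * w x) ≤ c/x^2 * E x := by
      have habs : 2 * |m^2-1/4| * |u x * w x| ≤ c * E x := by
        rw [hc, abs_mul]
        have h2 : 2 * |u x| * |w x| ≤ u x^2 + w x^2 := by
          nlinarith [sq_nonneg (|u x| - |w x|), sq_abs (u x), sq_abs (w x)]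
        have := mul_le_mul_of_nonneg_left h2 (abs_nonneg (m^2-1/4))
        calc 2 * |m^2-1/4| * (|u x| * |w x|) = |m^2-1/4| * (2 * |u x| * |w x|) := by ring
          _ ≤ |m^2-1/4| * (u x^2 + w x^2) := this
          _ = |m^2-1/4| * E x := rfl
      have h1 : 2*(m^2-1/4) * (u x * w x) ≤ c * E x := by
        calc 2*(m^2-1/4) * (u x * w x) ≤ |2*(m^2-1/4) * (u x * w x)| := le_abs_self _
          _ = 2 * |m^2-1/4| * |u x * w x| := by rw [abs_mul]; congr 1; rw [abs_mul]; simp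
          _ ≤ c * E x := habs
      calc 2*(m^2-1/4)/x^2 * (u x * w x) = (2*(m^2-1/4) * (u x * w x))/x^2 := by ring
        _ ≤ (c * E x)/x^2 := by gcongr
        _ = c/x^2 * E x := by ring
    have h2 : 2*(m^2-1/4)/x^2 * (u x * w x) * Real.exp (c/x)
        ≤ c/x^2 * E x * Real.exp (c/x) := mul_le_mul_of_nonneg_right hkey hexp.le
    have h3 : E x * (Real.exp (c/x) * (-c/x^2)) = -(c/x^2 * E x * Real.exp (c/x)) := by ring
    linarith [h2, h3]
  have hGanti : AntitoneOn G (Ici 1) := by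
    apply antitoneOn_of_deriv_nonpos (convex_Ici 1)
    · intro x hx
      have hx0 : (0:ℝ) < x := lt_of_lt_of_le one_pos hx
      exact (hGderiv x hx0).continuousAt.continuousWithinAt
    · rw [interior_Ici]
      intro x hx
      have hx0 : (0:ℝ) < x := lt_trans one_pos hx
      exact (hGderiv x hx0).differentiableAt.differentiableWithinAt
    · rw [interior_Ici]
      intro x hx
      exact hGnonpos x hx
  have hEnonneg : ∀ x, 0 ≤ E x := by
    intro x
    have : E x = u x^2 + w x^2 := rfl
    rw [this]; positivity
  have hc0 : 0 ≤ c := abs_nonneg _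
  have hEbound : ∀ x : ℝ, 1 ≤ x → E x ≤ E 1 * Real.exp c := by
    intro x hx
    have h1 : G x ≤ G 1 := hGanti (self_mem_Ici) (le_trans le_rfl hx : x ∈ Ici 1) hx
    have hEx : E x ≤ E x * Real.exp (c/x) := by
      apply le_mul_of_one_le_right (hEnonneg x)
      rw [← Real.exp_zero]
      apply Real.exp_le_exp.mpr
      positivity
    have hG1 : G 1 = E 1 * Real.exp c := by
      show E 1 * Real.exp (c/1) = E 1 * Real.exp c
      rw [div_one]
    have hGx : G x = E x * Real.exp (c/x) := rfl
    rw [hGx, hG1] at h1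
    exact le_trans hEx h1
  set K0 := Real.sqrt (E 1 * Real.exp c) with hK0
  have hK0nonneg : 0 ≤ K0 := Real.sqrt_nonneg _
  refine ⟨(m+3/2) * K0, by positivity, ?_⟩
  intro x hx
  have hx0 : (0:ℝ) < x := lt_of_lt_of_le one_pos hx
  have hsx : (0:ℝ) < Real.sqrt x := Real.sqrt_pos.mpr hx0
  have hsx1 : (1:ℝ) ≤ Real.sqrt x := by
    rw [show (1:ℝ) = Real.sqrt 1 by rw [Real.sqrt_one]]
    exact Real.sqrt_le_sqrt hx
  have hEx := hEbound x hx
  have hExpand : E x = u x ^ 2 + w x ^ 2 := rfl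
  have hub : |u x| ≤ K0 := by
    rw [← Real.sqrt_sq_eq_abs]
    apply Real.sqrt_le_sqrt
    linarith [sq_nonneg (w x), hEx, hExpand]
  have hwb : |w x| ≤ K0 := by
    rw [← Real.sqrt_sq_eq_abs]
    apply Real.sqrt_le_sqrt
    linarith [sq_nonneg (u x), hEx, hExpand]
  have hv : Real.sqrt x * besselJ (m+1) x = (m+1/2)/x * u x - w x := by
    rw [hw]; ring
  have hvb : |Real.sqrt x * besselJ (m+1) x| ≤ (m+3/2) * K0 := by
    rw [hv]
    calc |(m+1/2)/x * u x - w x| ≤ |(m+1/2)/x * u x| + |w x| := abs_sub _ _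
      _ = (m+1/2)/x * |u x| + |w x| := by
          rw [abs_mul, abs_of_nonneg (by positivity : (0:ℝ) ≤ (m+1/2)/x)]
      _ ≤ (m+1/2) * K0 + K0 := by
          have h1 : (m+1/2)/x ≤ m+1/2 := by
            apply div_le_self (by linarith) hx
          have h2 : (m+1/2)/x * |u x| ≤ (m+1/2) * K0 :=
            mul_le_mul h1 hub (abs_nonneg _) (by linarith)
          linarith
      _ = (m+3/2) * K0 := by ring
  rw [le_div_iff₀ hsx]
  calc |besselJ (m+1) x| * Real.sqrt x = |Real.sqrt x * besselJ (m+1) x| := by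
        rw [abs_mul, abs_of_pos hsx]; ring
    _ ≤ (m+3/2) * K0 := hvb

lemma besselJ_contOn {μ : ℝ} (hμ : 0 ≤ μ) : ContinuousOn (besselJ μ) (Ioi 0) :=
  fun x hx => (besselJ_hasDeriv hμ hx).continuousAt.continuousWithinAt

lemma Mb_nonneg : 0 ≤ Mb := tsum_nonneg fun k => by positivity

lemma besselJ_intInt_small {μ : ℝ} (hμ : 0 ≤ μ) {T : ℝ} (h0 : 0 ≤ T) (h1 : T ≤ 2) :
    IntervalIntegrable (besselJ μ) volume 0 T := by
  rw [intervalIntegrable_iff_integrableOn_Ioc_of_le h0]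
  constructor
  · exact ((besselJ_contOn hμ).mono Ioc_subset_Ioi_self).aestronglyMeasurable measurableSet_Ioc
  · apply HasFiniteIntegral.restrict_of_bounded (C := Mb) measure_Ioc_lt_top
    filter_upwards [ae_restrict_mem measurableSet_Ioc] with x hx
    rw [Real.norm_eq_abs]
    exact besselJ_bound1 hμ hx.1.le (le_trans hx.2 h1)

lemma besselJ_partial_bounded {m : ℝ} (hm : 0 ≤ m) :
    ∃ S : ℝ, ∀ T : ℝ, 0 ≤ T → |∫ x in (0:ℝ)..T, besselJ m x| ≤ S := by
  obtain ⟨K, hK0, hK⟩ := besselJ_decay hm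
  refine ⟨Mb + (2*K + 2*(m+1)*K), ?_⟩
  intro T hT
  have hMb := Mb_nonneg
  by_cases hT1 : T ≤ 1
  · have hb := intervalIntegral.norm_integral_le_of_norm_le_const (C := Mb)
      (f := besselJ m) (a := 0) (b := T) (fun x hx => by
        rw [Set.uIoc_of_le hT] at hx
        rw [Real.norm_eq_abs]
        exact besselJ_bound1 hm hx.1.le (by linarith [hx.2]))
    rw [Real.norm_eq_abs] at hb
    have : Mb * |T - 0| ≤ Mb := by
      rw [sub_zero, abs_of_nonneg hT]
      nlinarith
    nlinarith [hK0, hm, hb, this]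
  · push_neg at hT1
    have hT1' : (1:ℝ) ≤ T := hT1.le
    -- integrability pieces
    have hi1 : IntervalIntegrable (besselJ m) volume 0 1 :=
      besselJ_intInt_small hm zero_le_one one_le_two
    have hIccsub : Icc (1:ℝ) T ⊆ Ioi 0 := fun x hx => lt_of_lt_of_le one_pos hx.1
    have hcont2 : ContinuousOn (besselJ m) (uIcc 1 T) := by
      rw [uIcc_of_le hT1']
      exact (besselJ_contOn hm).mono hIccsub
    have hi2 : IntervalIntegrable (besselJ m) volume 1 T := hcont2.intervalIntegrable
    have hcontg : ContinuousOn (fun x => (m+1)/x * besselJ (m+1) x) (uIcc 1 T) := by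
      rw [uIcc_of_le hT1']
      apply ContinuousOn.mul
      · exact continuousOn_const.div continuousOn_id
          (fun x hx => ne_of_gt (lt_of_lt_of_le one_pos hx.1))
      · exact (besselJ_contOn (by linarith : (0:ℝ) ≤ m+1)).mono hIccsub
    have hig : IntervalIntegrable (fun x => (m+1)/x * besselJ (m+1) x) volume 1 T :=
      hcontg.intervalIntegrable
    -- FTC on [1, T]
    have hd : ∀ x ∈ uIcc (1:ℝ) T,
        HasDerivAt (besselJ (m+1)) (besselJ m x - (m+1)/x * besselJ (m+1) x) x := by
      intro x hx
      rw [uIcc_of_le hT1'] at hx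
      exact besselJ1_hasDeriv hm (lt_of_lt_of_le one_pos hx.1)
    have hFTC := intervalIntegral.integral_eq_sub_of_hasDerivAt hd (hi2.sub hig)
    have hsub := intervalIntegral.integral_sub hi2 hig
    have hmid : ∫ x in (1:ℝ)..T, besselJ m x
        = (besselJ (m+1) T - besselJ (m+1) 1) + ∫ x in (1:ℝ)..T, (m+1)/x * besselJ (m+1) x := by
      rw [← hFTC, hsub]; ring
    -- bound the tail integral
    have hrpow : ∀ x : ℝ, 1 ≤ x → ‖(m+1)/x * besselJ (m+1) x‖ ≤ (m+1)*K*x^(-(3:ℝ)/2) := by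
      intro x hx
      have hx0 : (0:ℝ) < x := lt_of_lt_of_le one_pos hx
      have hsx : (0:ℝ) < Real.sqrt x := Real.sqrt_pos.mpr hx0
      have hxx : x^(-(3:ℝ)/2) = (x * Real.sqrt x)⁻¹ := by
        rw [show (-(3:ℝ)/2) = -(3/2 : ℝ) by norm_num, Real.rpow_neg hx0.le]
        congr 1
        rw [show ((3:ℝ)/2) = 1 + 1/2 by norm_num, Real.rpow_add hx0, Real.rpow_one,
          ← Real.sqrt_eq_rpow]
      rw [Real.norm_eq_abs, abs_mul, hxx]
      have h1 : |(m+1)/x| = (m+1)/x := abs_of_nonneg (by positivity)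
      rw [h1]
      have h2 : |besselJ (m+1) x| ≤ K / Real.sqrt x := hK x hx
      calc (m+1)/x * |besselJ (m+1) x| ≤ (m+1)/x * (K / Real.sqrt x) := by
            apply mul_le_mul_of_nonneg_left h2 (by positivity)
        _ = (m+1)*K*(x * Real.sqrt x)⁻¹ := by field_simp
    have hirpow : IntervalIntegrable (fun x : ℝ => (m+1)*K*x^(-(3:ℝ)/2)) volume 1 T := by
      apply ContinuousOn.intervalIntegrable
      apply ContinuousOn.mul continuousOn_const
      intro x hx
      rw [uIcc_of_le hT1'] at hx
      exact (Real.continuousAt_rpow_const x _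
        (Or.inl (ne_of_gt (lt_of_lt_of_le one_pos hx.1)))).continuousWithinAt
    have htail : |∫ x in (1:ℝ)..T, (m+1)/x * besselJ (m+1) x| ≤ 2*(m+1)*K := by
      have hb := intervalIntegral.norm_integral_le_of_norm_le
        (f := fun x => (m+1)/x * besselJ (m+1) x)
        (g := fun x : ℝ => (m+1)*K*x^(-(3:ℝ)/2)) (μ := volume) (a := 1) (b := T) hT1'
        (by
          filter_upwards with x hx
          exact hrpow x hx.1.le) hirpow
      rw [Real.norm_eq_abs] at hb
      have hne : (0:ℝ) ∉ uIcc (1:ℝ) T := by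
        rw [uIcc_of_le hT1']
        rintro ⟨h0, -⟩
        linarith
      have hval : ∫ x in (1:ℝ)..T, (m+1)*K*x^(-(3:ℝ)/2)
          = (m+1)*K*(2*(1 - T^(-(1:ℝ)/2))) := by
        rw [intervalIntegral.integral_const_mul, integral_rpow (Or.inr ⟨by norm_num, hne⟩)]
        have e : (-(3:ℝ)/2 + 1) = (-(1:ℝ)/2) := by norm_num
        rw [e, Real.one_rpow]
        ring
      have hT0 : (0:ℝ) ≤ T^(-(1:ℝ)/2) := Real.rpow_nonneg (by linarith) _
      have hT2 : T^(-(1:ℝ)/2) ≤ 1 := by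
        apply Real.rpow_le_one_of_one_le_of_nonpos hT1'
        norm_num
      calc |∫ x in (1:ℝ)..T, (m+1)/x * besselJ (m+1) x|
          ≤ |∫ x in (1:ℝ)..T, (m+1)*K*x^(-(3:ℝ)/2)| := le_trans hb (le_abs_self _)
        _ = |(m+1)*K*(2*(1 - T^(-(1:ℝ)/2)))| := by rw [hval]
        _ = (m+1)*K*(2*(1 - T^(-(1:ℝ)/2))) := abs_of_nonneg (by
            have h1 : (0:ℝ) ≤ (m+1)*K := mul_nonneg (by linarith) hK0
            nlinarith)
        _ ≤ 2*(m+1)*K := by nlinarith [mul_nonneg (by linarith : (0:ℝ) ≤ m+1) hK0]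
    -- endpoint bounds
    have hJ1T : |besselJ (m+1) T| ≤ K := by
      have := hK T hT1'
      have hsT : (1:ℝ) ≤ Real.sqrt T := by
        rw [show (1:ℝ) = Real.sqrt 1 by rw [Real.sqrt_one]]
        exact Real.sqrt_le_sqrt hT1'
      calc |besselJ (m+1) T| ≤ K / Real.sqrt T := this
        _ ≤ K := div_le_self hK0 hsT
    have hJ11 : |besselJ (m+1) 1| ≤ K := by
      have := hK 1 le_rfl
      rwa [Real.sqrt_one, div_one] at this
    -- first piece
    have hfirst : |∫ x in (0:ℝ)..1, besselJ m x| ≤ Mb := by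
      have hb := intervalIntegral.norm_integral_le_of_norm_le_const (C := Mb)
        (f := besselJ m) (a := 0) (b := 1) (fun x hx => by
          rw [Set.uIoc_of_le zero_le_one] at hx
          rw [Real.norm_eq_abs]
          exact besselJ_bound1 hm hx.1.le (by linarith [hx.2]))
      rw [Real.norm_eq_abs] at hb
      simpa using hb
    -- combine
    have hsplit : ∫ x in (0:ℝ)..T, besselJ m x
        = (∫ x in (0:ℝ)..1, besselJ m x) + ∫ x in (1:ℝ)..T, besselJ m x :=
      (intervalIntegral.integral_add_adjacent_intervals hi1 hi2).symm
    rw [hsplit, hmid]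
    have habs2 : |besselJ (m+1) T - besselJ (m+1) 1| ≤ 2*K := by
      calc |besselJ (m+1) T - besselJ (m+1) 1| ≤ |besselJ (m+1) T| + |besselJ (m+1) 1| :=
            abs_sub _ _
        _ ≤ 2*K := by linarith
    have h4 := abs_add_le (∫ x in (0:ℝ)..1, besselJ m x)
      ((besselJ (m+1) T - besselJ (m+1) 1) + ∫ x in (1:ℝ)..T, (m+1)/x * besselJ (m+1) x)
    have h5 := abs_add_le (besselJ (m+1) T - besselJ (m+1) 1)
      (∫ x in (1:ℝ)..T, (m+1)/x * besselJ (m+1) x)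
    linarith [hfirst, habs2, htail, h4, h5]


theorem stmt1 (m b : ℝ) (hm : 0 ≤ m) (hb : 0 < b) :
    ∃ C : ℝ, ∀ t ∈ Set.Icc (0 : ℝ) b, ∀ ω : ℝ, 1 ≤ ω →
      |∫ x in (0 : ℝ)..t, besselJ m (ω * x)| ≤ C / ω := by

  obtain ⟨S, hS⟩ := besselJ_partial_bounded hm
  refine ⟨S, ?_⟩
  intro t ht ω hω
  have hω0 : (0:ℝ) < ω := lt_of_lt_of_le one_pos hω
  have hsub := intervalIntegral.integral_comp_mul_left (a := 0) (b := t) (besselJ m) hω0.ne'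
  rw [hsub, mul_zero, smul_eq_mul, abs_mul, abs_inv, abs_of_pos hω0]
  have hωt : 0 ≤ ω * t := mul_nonneg hω0.le ht.1
  have hb2 := hS (ω * t) hωt
  calc ω⁻¹ * |∫ x in (0:ℝ)..(ω*t), besselJ m x| ≤ ω⁻¹ * S :=
        mul_le_mul_of_nonneg_left hb2 (inv_nonneg.mpr hω0.le)
    _ = S / ω := by rw [inv_mul_eq_div]
end

section
/- For α > 0, b > 0, m ≥ 0, and ω ≥ 1, there exists a constant C depending only on α, m, b such that |∫₀ᵗ x^α J_m(ωx) dx| ≤ C/ω for all t ∈ [0,b]. -/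
open MeasureTheory intervalIntegral Real Set Polynomial

namespace BJaux

noncomputable def c (ν : ℝ) (k : ℕ) : ℝ := (-1)^k / (k.factorial * Real.Gamma (ν + k + 1))

lemma Gamma_arg_pos {ν : ℝ} (hν : 0 ≤ ν) (k : ℕ) : 0 < Real.Gamma (ν + k + 1) :=
  Real.Gamma_pos_of_pos (by positivity)

lemma Gamma_lb {ν : ℝ} (hν : 0 ≤ ν) (k : ℕ) :
    (k.factorial : ℝ) * Real.Gamma (ν + 1) ≤ Real.Gamma (ν + k + 1) := by
  induction k with
  | zero => simp
  | succ n ih =>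
      have h1 : Real.Gamma (ν + (n+1 : ℕ) + 1) = (ν + n + 1) * Real.Gamma (ν + n + 1) := by
        have : (ν + (n+1 : ℕ) + 1) = (ν + n + 1) + 1 := by push_cast; ring
        rw [this, Real.Gamma_add_one (by positivity)]
      rw [h1]
      have h2 : ((n+1 : ℕ) : ℝ) ≤ ν + n + 1 := by push_cast; linarith
      calc ((n+1 : ℕ).factorial : ℝ) * Real.Gamma (ν + 1)
          = (n+1 : ℕ) * ((n.factorial : ℝ) * Real.Gamma (ν + 1)) := by
            rw [Nat.factorial_succ]; push_cast; ring
        _ ≤ (ν + n + 1) * Real.Gamma (ν + n + 1) := by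
            apply mul_le_mul h2 ih (by positivity) (by linarith [Gamma_arg_pos hν n])

lemma abs_c_le {ν : ℝ} (hν : 0 ≤ ν) (k : ℕ) :
    |c ν k| ≤ 1 / ((k.factorial : ℝ) * k.factorial * Real.Gamma (ν + 1)) := by
  have hG := Gamma_arg_pos hν k
  have hG1 : 0 < Real.Gamma (ν + 1) := Real.Gamma_pos_of_pos (by positivity)
  have hf : (0:ℝ) < k.factorial := by exact_mod_cast k.factorial_pos
  have : |c ν k| = 1 / ((k.factorial : ℝ) * Real.Gamma (ν + k + 1)) := by
    rw [c, abs_div, abs_pow, abs_neg, abs_one, one_pow, abs_of_pos (by positivity)]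
  rw [this]
  apply one_div_le_one_div_of_le (by positivity)
  calc (k.factorial : ℝ) * k.factorial * Real.Gamma (ν + 1)
      = (k.factorial : ℝ) * ((k.factorial : ℝ) * Real.Gamma (ν + 1)) := by ring
    _ ≤ (k.factorial : ℝ) * Real.Gamma (ν + k + 1) := by
        exact mul_le_mul_of_nonneg_left (Gamma_lb hν k) (le_of_lt hf)

noncomputable def M (ν R : ℝ) (k : ℕ) : ℝ :=
  (16 * max R 1)^k / (k.factorial : ℝ) / Real.Gamma (ν + 1)

lemma M_nonneg {ν : ℝ} (hν : 0 ≤ ν) (R : ℝ) (k : ℕ) : 0 ≤ M ν R k := by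
  have hG1 : 0 < Real.Gamma (ν + 1) := Real.Gamma_pos_of_pos (by positivity)
  have hb : (0:ℝ) ≤ 16 * max R 1 := by
    have : (1:ℝ) ≤ max R 1 := le_max_right _ _
    linarith
  have hf : (0:ℝ) < (k.factorial : ℝ) := by exact_mod_cast k.factorial_pos
  unfold M
  positivity

lemma summable_M {ν : ℝ} (R : ℝ) : Summable (M ν R) :=
  (Real.summable_pow_div_factorial (16 * max R 1)).div_const (Real.Gamma (ν + 1))

lemma nat_le_two_pow (k : ℕ) : (k:ℝ) ≤ 2^k := by
  have h := Nat.lt_two_pow_self (n := k)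
  have : (k:ℝ) < ((2^k : ℕ) : ℝ) := by exact_mod_cast h
  simpa using this.le

lemma pow_abs_le {u R : ℝ} (hu : |u| ≤ R) {j k : ℕ} (hjk : j ≤ k) :
    |u|^j ≤ (max R 1)^k := by
  calc |u|^j ≤ (max R 1)^j :=
        pow_le_pow_left₀ (abs_nonneg u) (le_trans hu (le_max_left _ _)) j
    _ ≤ (max R 1)^k := pow_le_pow_right₀ (le_max_right _ _) hjk

lemma combine {ν R : ℝ} (hν : 0 ≤ ν) (k : ℕ) {X : ℝ}
    (h2 : |X| ≤ 16^k * (max R 1)^k) : |c ν k * X| ≤ M ν R k := by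
  have hG1 : 0 < Real.Gamma (ν + 1) := Real.Gamma_pos_of_pos (by positivity)
  have hf : (0:ℝ) < (k.factorial : ℝ) := by exact_mod_cast k.factorial_pos
  have hf1 : (1:ℝ) ≤ (k.factorial : ℝ) := by exact_mod_cast k.factorial_pos
  have hmx : (0:ℝ) ≤ (max R 1)^k := by positivity
  rw [abs_mul]
  calc |c ν k| * |X| ≤ (1 / ((k.factorial : ℝ) * k.factorial * Real.Gamma (ν + 1)))
        * (16^k * (max R 1)^k) := by
        apply mul_le_mul (abs_c_le hν k) h2 (abs_nonneg _) (by positivity)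
    _ ≤ (1 / ((k.factorial : ℝ) * 1 * Real.Gamma (ν + 1))) * (16^k * (max R 1)^k) := by
        apply mul_le_mul_of_nonneg_right _ (by positivity)
        apply one_div_le_one_div_of_le (by positivity)
        apply mul_le_mul_of_nonneg_right _ (le_of_lt hG1)
        exact mul_le_mul_of_nonneg_left hf1 (le_of_lt hf)
    _ = M ν R k := by
        unfold M; rw [mul_pow]; field_simp

lemma bound0 {ν R u : ℝ} (hν : 0 ≤ ν) (hu : |u| ≤ R) (k : ℕ) :
    |c ν k * u^k| ≤ M ν R k := by
  apply combine hν k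
  rw [abs_pow]
  calc |u|^k ≤ (max R 1)^k := pow_abs_le hu le_rfl
    _ ≤ 16^k * (max R 1)^k := by
      have h16 : (1:ℝ) ≤ 16^k := one_le_pow₀ (by norm_num)
      exact le_mul_of_one_le_left (by positivity) h16

lemma bound1 {ν R u : ℝ} (hν : 0 ≤ ν) (hu : |u| ≤ R) (k : ℕ) :
    |c ν k * ((k:ℝ) * u^(k-1))| ≤ M ν R k := by
  apply combine hν k
  rw [abs_mul, abs_pow, Nat.abs_cast]
  have h1 : (k:ℝ) ≤ 16^k := by
    calc (k:ℝ) ≤ 2^k := nat_le_two_pow k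
      _ ≤ 16^k := pow_le_pow_left₀ (by norm_num) (by norm_num) k
  exact mul_le_mul h1 (pow_abs_le hu (Nat.sub_le k 1)) (by positivity) (by positivity)

lemma bound2 {ν R u : ℝ} (hν : 0 ≤ ν) (hu : |u| ≤ R) (k : ℕ) :
    |c ν k * ((k:ℝ) * (((k-1 : ℕ):ℝ) * u^(k-2)))| ≤ M ν R k := by
  apply combine hν k
  rw [abs_mul, abs_mul, abs_pow, Nat.abs_cast, Nat.abs_cast]
  have h2p : ∀ j : ℕ, (0:ℝ) ≤ 2^j := fun j => by positivity
  have h1 : (k:ℝ) * ((k-1:ℕ):ℝ) ≤ 16^k := by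
    have ha : (k:ℝ) ≤ 2^k := nat_le_two_pow k
    have hb : ((k-1:ℕ):ℝ) ≤ 2^k := by
      calc ((k-1:ℕ):ℝ) ≤ (k:ℝ) := by exact_mod_cast Nat.sub_le k 1
        _ ≤ 2^k := nat_le_two_pow k
    calc (k:ℝ) * ((k-1:ℕ):ℝ) ≤ 2^k * 2^k := by
          apply mul_le_mul ha hb (by positivity) (h2p k)
      _ = 4^k := by rw [← mul_pow]; norm_num
      _ ≤ 16^k := pow_le_pow_left₀ (by norm_num) (by norm_num) k
  rw [← mul_assoc]
  exact mul_le_mul h1 (pow_abs_le hu (Nat.sub_le k 2)) (by positivity) (by positivity)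


noncomputable def g (ν u : ℝ) : ℝ := ∑' k : ℕ, c ν k * u ^ k
noncomputable def gd (ν u : ℝ) : ℝ := ∑' k : ℕ, c ν k * ((k:ℝ) * u ^ (k-1))
noncomputable def gdd (ν u : ℝ) : ℝ :=
  ∑' k : ℕ, c ν k * ((k:ℝ) * (((k-1 : ℕ):ℝ) * u ^ (k-2)))

lemma summable_g {ν : ℝ} (hν : 0 ≤ ν) (u : ℝ) : Summable (fun k : ℕ => c ν k * u ^ k) :=
  Summable.of_norm_bounded (summable_M |u|) (fun k => bound0 hν le_rfl k)

lemma summable_gd {ν : ℝ} (hν : 0 ≤ ν) (u : ℝ) :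
    Summable (fun k : ℕ => c ν k * ((k:ℝ) * u ^ (k-1))) :=
  Summable.of_norm_bounded (summable_M |u|) (fun k => bound1 hν le_rfl k)

lemma hasDerivAt_g {ν : ℝ} (hν : 0 ≤ ν) (u : ℝ) : HasDerivAt (g ν) (gd ν u) u := by
  have h := hasDerivAt_tsum_of_isPreconnected (summable_M (ν := ν) (|u|+1))
    (Metric.isOpen_ball (x := (0:ℝ)) (ε := |u|+1))
    (convex_ball (0:ℝ) (|u|+1)).isPreconnected
    (g := fun k z => c ν k * z ^ k)
    (g' := fun k z => c ν k * ((k:ℝ) * z ^ (k-1)))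
    (u := M ν (|u|+1)) (y₀ := 0) (y := u)
    (fun k z _ => (hasDerivAt_pow k z).const_mul (c ν k))
    (fun k z hz => by
      have hzR : |z| ≤ |u| + 1 := by
        have h3 := mem_ball_zero_iff.mp hz
        rw [Real.norm_eq_abs] at h3
        linarith
      exact bound1 hν hzR k)
    (by rw [Metric.mem_ball, dist_zero_right, norm_zero]; positivity)
    (summable_g hν 0)
    (by rw [Metric.mem_ball, dist_zero_right, Real.norm_eq_abs]; linarith)
  exact h

lemma hasDerivAt_gd {ν : ℝ} (hν : 0 ≤ ν) (u : ℝ) : HasDerivAt (gd ν) (gdd ν u) u := by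
  have h := hasDerivAt_tsum_of_isPreconnected (summable_M (ν := ν) (|u|+1))
    (Metric.isOpen_ball (x := (0:ℝ)) (ε := |u|+1))
    (convex_ball (0:ℝ) (|u|+1)).isPreconnected
    (g := fun k z => c ν k * ((k:ℝ) * z ^ (k-1)))
    (g' := fun k z => c ν k * ((k:ℝ) * (((k-1 : ℕ):ℝ) * z ^ (k-2))))
    (u := M ν (|u|+1)) (y₀ := 0) (y := u)
    (fun k z _ => by
      have h1 : HasDerivAt (fun z : ℝ => (c ν k * (k:ℝ)) * z ^ (k-1))
          ((c ν k * (k:ℝ)) * (((k-1:ℕ):ℝ) * z ^ (k-1-1))) z :=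
        (hasDerivAt_pow (k-1) z).const_mul (c ν k * (k:ℝ))
      have h2 : k - 1 - 1 = k - 2 := by omega
      rw [h2] at h1
      show HasDerivAt (fun z : ℝ => c ν k * ((k:ℝ) * z ^ (k-1)))
          (c ν k * ((k:ℝ) * (((k-1:ℕ):ℝ) * z ^ (k-2)))) z
      have heq : (fun z : ℝ => c ν k * ((k:ℝ) * z ^ (k-1)))
          = (fun z : ℝ => (c ν k * (k:ℝ)) * z ^ (k-1)) := by funext w; ring
      rw [heq, show c ν k * ((k:ℝ) * (((k-1:ℕ):ℝ) * z ^ (k-2)))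
          = (c ν k * (k:ℝ)) * (((k-1:ℕ):ℝ) * z ^ (k-2)) from by ring]
      exact h1)
    (fun k z hz => by
      have hzR : |z| ≤ |u| + 1 := by
        have h3 := mem_ball_zero_iff.mp hz
        rw [Real.norm_eq_abs] at h3
        linarith
      exact bound2 hν hzR k)
    (by rw [Metric.mem_ball, dist_zero_right, norm_zero]; positivity)
    (summable_gd hν 0)
    (by rw [Metric.mem_ball, dist_zero_right, Real.norm_eq_abs]; linarith)
  exact h

lemma continuous_g {ν : ℝ} (hν : 0 ≤ ν) : Continuous (g ν) :=
  continuous_iff_continuousAt.mpr fun u => (hasDerivAt_g hν u).continuousAt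


lemma summable_gdd {ν : ℝ} (hν : 0 ≤ ν) (u : ℝ) :
    Summable (fun k : ℕ => c ν k * ((k:ℝ) * (((k-1 : ℕ):ℝ) * u ^ (k-2)))) :=
  Summable.of_norm_bounded (summable_M |u|) (fun k => bound2 hν le_rfl k)

lemma c_step {m : ℝ} (hm : 0 ≤ m) (k : ℕ) : c (m+1) k * (m + 1 + k) = c m k := by
  have hG : 0 < Real.Gamma (m + k + 1) := Gamma_arg_pos hm k
  have hf : (0:ℝ) < k.factorial := by exact_mod_cast k.factorial_pos
  have h1 : Real.Gamma (m + 1 + k + 1) = (m + k + 1) * Real.Gamma (m + k + 1) := by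
    rw [show m + 1 + (k:ℝ) + 1 = (m + k + 1) + 1 by ring, Real.Gamma_add_one (by positivity)]
  rw [c, c, h1]
  field_simp
  ring

lemma c_rec {ν : ℝ} (hν : 0 ≤ ν) (k : ℕ) :
    c ν (k+1) * (((k:ℝ)+1) * (ν + k + 1)) = - c ν k := by
  have hG : 0 < Real.Gamma (ν + k + 1) := Gamma_arg_pos hν k
  have hf : (0:ℝ) < k.factorial := by exact_mod_cast k.factorial_pos
  have h1 : Real.Gamma (ν + ((k:ℝ)+1) + 1) = (ν + k + 1) * Real.Gamma (ν + k + 1) := by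
    rw [show ν + ((k:ℝ)+1) + 1 = (ν + k + 1) + 1 by ring, Real.Gamma_add_one (by positivity)]
  rw [c, c, Nat.factorial_succ]
  push_cast
  rw [h1]
  field_simp
  ring

lemma g_rec {m : ℝ} (hm : 0 ≤ m) (u : ℝ) :
    (m+1) * g (m+1) u + u * gd (m+1) u = g m u := by
  have hm1 : (0:ℝ) ≤ m + 1 := by linarith
  have h2 : u * gd (m+1) u = ∑' k : ℕ, c (m+1) k * ((k:ℝ) * u^k) := by
    rw [gd, ← tsum_mul_left]
    apply tsum_congr
    intro k
    cases k with
    | zero => simp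
    | succ n => simp only [Nat.add_sub_cancel]; push_cast; ring
  have hs2 : Summable (fun k : ℕ => c (m+1) k * ((k:ℝ) * u^k)) := by
    apply Summable.congr ((summable_gd hm1 u).mul_right u)
    intro k
    cases k with
    | zero => simp
    | succ n => simp only [Nat.add_sub_cancel]; push_cast; ring
  have h1 : (m+1) * g (m+1) u = ∑' k : ℕ, c (m+1) k * ((m+1) * u^k) := by
    rw [g, ← tsum_mul_left]
    apply tsum_congr; intro k; ring
  have hs1 : Summable (fun k : ℕ => c (m+1) k * ((m+1) * u^k)) := by
    apply Summable.congr ((summable_g hm1 u).mul_left (m+1))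
    intro k; ring
  rw [h1, h2, ← Summable.tsum_add hs1 hs2, g]
  apply tsum_congr
  intro k
  have := c_step hm k
  calc c (m+1) k * ((m+1) * u^k) + c (m+1) k * ((k:ℝ) * u^k)
      = (c (m+1) k * (m + 1 + k)) * u^k := by ring
    _ = c m k * u^k := by rw [this]

lemma g_ODE {ν : ℝ} (hν : 0 ≤ ν) (u : ℝ) :
    u * gdd ν u + (ν+1) * gd ν u + g ν u = 0 := by
  -- rewrite u * gdd as a tsum
  have e1 : u * gdd ν u = ∑' k : ℕ, c ν k * (((k:ℝ) * ((k-1:ℕ):ℝ)) * u^(k-1)) := by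
    rw [gdd, ← tsum_mul_left]
    apply tsum_congr
    intro k
    match k with
    | 0 => simp
    | 1 => simp
    | (n+2) =>
      simp only [show n+2-2 = n from rfl, show n+2-1 = n+1 from rfl]
      push_cast
      ring
  have hs1 : Summable (fun k : ℕ => c ν k * (((k:ℝ) * ((k-1:ℕ):ℝ)) * u^(k-1))) := by
    apply Summable.congr ((summable_gdd hν u).mul_right u)
    intro k
    match k with
    | 0 => simp
    | 1 => simp
    | (n+2) =>
      simp only [show n+2-2 = n from rfl, show n+2-1 = n+1 from rfl]
      push_cast
      ring
  have e2 : (ν+1) * gd ν u = ∑' k : ℕ, c ν k * ((ν+1) * ((k:ℝ) * u^(k-1))) := by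
    rw [gd, ← tsum_mul_left]
    apply tsum_congr; intro k; ring
  have hs2 : Summable (fun k : ℕ => c ν k * ((ν+1) * ((k:ℝ) * u^(k-1)))) := by
    apply Summable.congr ((summable_gd hν u).mul_left (ν+1))
    intro k; ring
  -- the combined series
  have e3 : u * gdd ν u + (ν+1) * gd ν u
      = ∑' k : ℕ, c ν k * (((k:ℝ) * (ν + k)) * u^(k-1)) := by
    rw [e1, e2, ← Summable.tsum_add hs1 hs2]
    apply tsum_congr
    intro k
    match k with
    | 0 => simp
    | (n+1) =>
      simp only [Nat.add_sub_cancel]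
      push_cast
      ring
  have hs3 : Summable (fun k : ℕ => c ν k * (((k:ℝ) * (ν + k)) * u^(k-1))) := by
    apply Summable.congr (hs1.add hs2)
    intro k
    match k with
    | 0 => simp
    | (n+1) =>
      simp only [Nat.add_sub_cancel]
      push_cast
      ring
  rw [e3, Summable.tsum_eq_zero_add hs3]
  have e5 : (∑' k : ℕ, c ν (k+1) * ((((k+1:ℕ):ℝ) * (ν + ((k+1:ℕ):ℝ))) * u^((k+1)-1)))
      = - g ν u := by
    rw [g, ← tsum_neg]
    apply tsum_congr
    intro k
    have hc := c_rec hν k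
    simp only [Nat.add_sub_cancel]
    push_cast
    calc c ν (k+1) * ((((k:ℝ)+1) * (ν + ((k:ℝ)+1))) * u^k)
        = (c ν (k+1) * (((k:ℝ)+1) * (ν + k + 1))) * u^k := by ring
      _ = -(c ν k * u^k) := by rw [hc]; ring
  rw [e5]
  norm_num


noncomputable def Jf (ν y : ℝ) : ℝ := (y/2)^ν * g ν ((y/2)^2)
noncomputable def J1 (ν y : ℝ) : ℝ :=
  ν * (y/2)^(ν-1) * (1/2) * g ν ((y/2)^2) + (y/2)^ν * (gd ν ((y/2)^2) * (y/2))

lemma hasDerivAt_sq (y : ℝ) : HasDerivAt (fun y : ℝ => (y/2)^2) (y/2) y := by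
  have heq : (fun y : ℝ => (y/2)^2) = fun y : ℝ => y^2 * (1/4) := by funext z; ring
  rw [heq]
  have h := (hasDerivAt_pow 2 y).mul_const (1/4)
  refine h.congr_deriv (Eq.symm ?_)
  push_cast
  ring

lemma hasDerivAt_q {ν : ℝ} (hν : 0 ≤ ν) (y : ℝ) :
    HasDerivAt (fun y : ℝ => g ν ((y/2)^2)) (gd ν ((y/2)^2) * (y/2)) y :=
  by have := (hasDerivAt_g hν ((y/2)^2)).comp y (hasDerivAt_sq y); exact this

lemma hasDerivAt_qd {ν : ℝ} (hν : 0 ≤ ν) (y : ℝ) :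
    HasDerivAt (fun y : ℝ => gd ν ((y/2)^2) * (y/2))
      ((gdd ν ((y/2)^2) * (y/2)) * (y/2) + gd ν ((y/2)^2) * (1/2)) y := by
  have h1 : HasDerivAt (fun y : ℝ => gd ν ((y/2)^2)) (gdd ν ((y/2)^2) * (y/2)) y :=
    by have := (hasDerivAt_gd hν ((y/2)^2)).comp y (hasDerivAt_sq y); exact this
  have h2 : HasDerivAt (fun y : ℝ => y/2) (1/2) y := by
    simpa using (hasDerivAt_id y).div_const 2
  exact h1.mul h2

lemma hasDerivAt_p {ν : ℝ} {y : ℝ} (hy : 0 < y) :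
    HasDerivAt (fun y : ℝ => (y/2)^ν) (ν * (y/2)^(ν-1) * (1/2)) y := by
  have h0 : (y/2) ≠ 0 := by positivity
  have h := (Real.hasDerivAt_rpow_const (p := ν) (Or.inl h0)).comp y
    ((hasDerivAt_id y).div_const 2)
  exact h

lemma hasDerivAt_Jf {ν : ℝ} (hν : 0 ≤ ν) {y : ℝ} (hy : 0 < y) :
    HasDerivAt (Jf ν) (J1 ν y) y := by
  have h := (hasDerivAt_p (ν := ν) hy).mul (hasDerivAt_q hν y)
  exact h

/-- second derivative of Jf, together with the Bessel ODE -/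
lemma besselODE {ν : ℝ} (hν : 1 ≤ ν) {y : ℝ} (hy : 0 < y) :
    ∃ J2v : ℝ, HasDerivAt (J1 ν) J2v y ∧
      y^2 * J2v + y * J1 ν y + (y^2 - ν^2) * Jf ν y = 0 := by
  have hν0 : (0:ℝ) ≤ ν := by linarith
  have h0 : (y/2) ≠ 0 := by positivity
  have hp1 : HasDerivAt (fun y : ℝ => (y/2)^(ν-1)) ((ν-1) * (y/2)^(ν-1-1) * (1/2)) y := by
    have h := (Real.hasDerivAt_rpow_const (p := ν-1) (Or.inl h0)).comp y
      ((hasDerivAt_id y).div_const 2)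
    exact h
  have hA : HasDerivAt (fun y : ℝ => ν * (y/2)^(ν-1) * (1/2) * g ν ((y/2)^2))
      ((ν-1) * (y/2)^(ν-1-1) * (1/2) * (ν * (1/2)) * g ν ((y/2)^2)
        + ν * (y/2)^(ν-1) * (1/2) * (gd ν ((y/2)^2) * (y/2))) y := by
    have h := ((hp1.const_mul (ν * (1/2))).mul (hasDerivAt_q hν0 y))
    have heq : (fun y : ℝ => ν * (1/2) * (y/2)^(ν-1) * g ν ((y/2)^2))
        = (fun y : ℝ => ν * (y/2)^(ν-1) * (1/2) * g ν ((y/2)^2)) := by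
      funext z; ring
    rw [← heq]
    refine h.congr_deriv (Eq.symm ?_)
    ring
  have hB : HasDerivAt (fun y : ℝ => (y/2)^ν * (gd ν ((y/2)^2) * (y/2)))
      (ν * (y/2)^(ν-1) * (1/2) * (gd ν ((y/2)^2) * (y/2))
        + (y/2)^ν * ((gdd ν ((y/2)^2) * (y/2)) * (y/2) + gd ν ((y/2)^2) * (1/2))) y :=
    (hasDerivAt_p hy).mul (hasDerivAt_qd hν0 y)
  refine ⟨_, hA.add hB, ?_⟩
  have hode := g_ODE hν0 ((y/2)^2)
  have e1 : (y/2)^(ν-1) = (y/2)^ν * (2/y) := by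
    rw [show ν - 1 = ν + (-1) from by ring, Real.rpow_add (by positivity),
      Real.rpow_neg_one]
    field_simp
  have e2 : (y/2)^(ν-1-1) = (y/2)^ν * (2/y) * (2/y) := by
    rw [show ν - 1 - 1 = (ν-1) + (-1) from by ring, Real.rpow_add (by positivity),
      Real.rpow_neg_one, e1]
    field_simp
  have hy' : y ≠ 0 := ne_of_gt hy
  have hQ : g ν ((y/2)^2) = -((y/2)^2 * gdd ν ((y/2)^2) + (ν+1) * gd ν ((y/2)^2)) := by
    linarith
  rw [Jf, J1, e1, e2, hQ]
  field_simp
  ring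


noncomputable def Gf (ν y : ℝ) : ℝ := (Jf ν y)^2 + (J1 ν y)^2
noncomputable def Hf (ν y : ℝ) : ℝ := Real.exp (ν^2 / y) * Gf ν y

lemma Hf_hasDeriv {ν : ℝ} (hν : 1 ≤ ν) {y : ℝ} (hy : 0 < y) :
    ∃ d : ℝ, HasDerivAt (Hf ν) d y ∧ (1 ≤ y → d ≤ 0) := by
  have hν0 : (0:ℝ) ≤ ν := by linarith
  obtain ⟨J2v, hJ2, hODE⟩ := besselODE hν hy
  have hJf := hasDerivAt_Jf hν0 hy
  have hG : HasDerivAt (Gf ν) (2 * Jf ν y * J1 ν y + 2 * J1 ν y * J2v) y := by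
    have h1 := hJf.pow 2
    have h2 := hJ2.pow 2
    have h := h1.add h2
    have heq : (fun y : ℝ => Jf ν y ^ 2 + J1 ν y ^ 2) = Gf ν := by
      funext z; rw [Gf]
    change HasDerivAt (fun y : ℝ => Jf ν y ^ 2 + J1 ν y ^ 2) _ y at h
    rw [heq] at h
    convert h using 1
    push_cast
    ring
  have hE : HasDerivAt (fun y : ℝ => Real.exp (ν^2 / y))
      (Real.exp (ν^2/y) * (ν^2 * -(y^2)⁻¹)) y := by
    have hinv : HasDerivAt (fun y : ℝ => ν^2 / y) (ν^2 * -(y^2)⁻¹) y := by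
      simpa [div_eq_mul_inv] using (hasDerivAt_inv (ne_of_gt hy)).const_mul (ν^2)
    exact hinv.exp
  have hH : HasDerivAt (Hf ν)
      (Real.exp (ν^2/y) * (ν^2 * -(y^2)⁻¹) * Gf ν y
        + Real.exp (ν^2/y) * (2 * Jf ν y * J1 ν y + 2 * J1 ν y * J2v)) y := by
    have h := hE.mul hG
    have heq : (fun y : ℝ => Real.exp (ν^2 / y) * Gf ν y) = Hf ν := by
      funext z; rw [Hf]
    change HasDerivAt (fun y : ℝ => Real.exp (ν^2 / y) * Gf ν y) _ y at h
    rw [heq] at h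
    exact h
  refine ⟨_, hH, ?_⟩
  intro h1y
  have hy2 : (0:ℝ) < y^2 := by positivity
  have key2 : y^2 * (2 * Jf ν y * J1 ν y + 2 * J1 ν y * J2v) ≤ ν^2 * Gf ν y := by
    have h2 : y^2 * J2v = -(y * J1 ν y) - (y^2 - ν^2) * Jf ν y := by linarith
    have expand : y^2 * (2 * Jf ν y * J1 ν y + 2 * J1 ν y * J2v)
        = 2 * y^2 * Jf ν y * J1 ν y + 2 * J1 ν y * (y^2 * J2v) := by ring
    rw [expand, h2, Gf]
    nlinarith [sq_nonneg (ν * (Jf ν y - J1 ν y)), mul_nonneg hy.le (sq_nonneg (J1 ν y)),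
      sq_nonneg (J1 ν y)]
  have hexp : (0:ℝ) < Real.exp (ν^2/y) := Real.exp_pos _
  have hS : 2 * Jf ν y * J1 ν y + 2 * J1 ν y * J2v ≤ ν^2 * Gf ν y / y^2 := by
    rw [le_div_iff₀ hy2]
    linarith [key2]
  have hmul := mul_le_mul_of_nonneg_left hS hexp.le
  have hzero : Real.exp (ν^2/y) * (ν^2 * -(y^2)⁻¹) * Gf ν y
      + Real.exp (ν^2/y) * (ν^2 * Gf ν y / y^2) = 0 := by
    field_simp
    ring
  linarith

lemma Hf_antitone {ν : ℝ} (hν : 1 ≤ ν) : AntitoneOn (Hf ν) (Ici 1) := by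
  apply antitoneOn_of_deriv_nonpos (convex_Ici 1)
  · intro y hy
    have hy0 : (0:ℝ) < y := lt_of_lt_of_le zero_lt_one hy
    obtain ⟨d, hd, _⟩ := Hf_hasDeriv hν hy0
    exact hd.continuousAt.continuousWithinAt
  · rw [interior_Ici]
    intro y hy
    have hy0 : (0:ℝ) < y := lt_trans zero_lt_one hy
    obtain ⟨d, hd, _⟩ := Hf_hasDeriv hν hy0
    exact hd.differentiableAt.differentiableWithinAt
  · rw [interior_Ici]
    intro y hy
    have hy0 : (0:ℝ) < y := lt_trans zero_lt_one hy
    obtain ⟨d, hd, hnp⟩ := Hf_hasDeriv hν hy0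
    rw [hd.deriv]
    exact hnp hy.le

lemma summable_abs_c {ν : ℝ} (hν : 0 ≤ ν) : Summable (fun k : ℕ => |c ν k|) := by
  have h := (summable_g hν 1).abs
  apply h.congr
  intro k
  simp

lemma abs_g_le {ν : ℝ} (hν : 0 ≤ ν) {u : ℝ} (hu : |u| ≤ 1) :
    |g ν u| ≤ ∑' k : ℕ, |c ν k| := by
  rw [g]
  have hsum := summable_g hν u
  calc |∑' k : ℕ, c ν k * u^k| ≤ ∑' k : ℕ, |c ν k * u^k| := by
        have hs : Summable fun k : ℕ => ‖c ν k * u^k‖ := by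
          simp only [Real.norm_eq_abs]
          exact hsum.abs
        have h := norm_tsum_le_tsum_norm hs
        simp only [Real.norm_eq_abs] at h
        exact h
    _ ≤ ∑' k : ℕ, |c ν k| := by
        apply Summable.tsum_le_tsum _ hsum.abs (summable_abs_c hν)
        intro k
        rw [abs_mul, abs_pow]
        have h1 : |u|^k ≤ 1 := pow_le_one₀ (abs_nonneg u) hu
        calc |c ν k| * |u|^k ≤ |c ν k| * 1 :=
              mul_le_mul_of_nonneg_left h1 (abs_nonneg _)
          _ = |c ν k| := mul_one _

lemma Jf_bounded {ν : ℝ} (hν : 1 ≤ ν) :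
    ∃ B : ℝ, 0 ≤ B ∧ ∀ y : ℝ, 0 ≤ y → |Jf ν y| ≤ B := by
  have hν0 : (0:ℝ) ≤ ν := by linarith
  have htsum_nonneg : 0 ≤ ∑' k : ℕ, |c ν k| := tsum_nonneg (fun k => abs_nonneg _)
  refine ⟨max (∑' k : ℕ, |c ν k|) (Real.sqrt (Hf ν 1)),
    le_trans htsum_nonneg (le_max_left _ _), ?_⟩
  intro y hy
  rcases le_or_gt y 1 with h1|h1
  · rw [Jf, abs_mul]
    have h2 : |(y/2)^ν| ≤ 1 := by
      rw [abs_of_nonneg (Real.rpow_nonneg (by linarith) ν)]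
      exact Real.rpow_le_one (by linarith) (by linarith) hν0
    have h3 : |g ν ((y/2)^2)| ≤ ∑' k : ℕ, |c ν k| := by
      apply abs_g_le hν0
      rw [abs_of_nonneg (sq_nonneg _)]
      nlinarith
    calc |(y/2)^ν| * |g ν ((y/2)^2)| ≤ 1 * (∑' k : ℕ, |c ν k|) :=
          mul_le_mul h2 h3 (abs_nonneg _) zero_le_one
      _ = ∑' k : ℕ, |c ν k| := one_mul _
      _ ≤ _ := le_max_left _ _
  · have hmono := Hf_antitone hν
    have hH : Hf ν y ≤ Hf ν 1 :=
      hmono (mem_Ici.mpr le_rfl) (mem_Ici.mpr h1.le) h1.le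
    have hGf : (Jf ν y)^2 ≤ Hf ν y := by
      rw [Hf, Gf]
      have hy0 : (0:ℝ) < y := lt_trans zero_lt_one h1
      have hexp : 1 ≤ Real.exp (ν^2/y) := Real.one_le_exp (by positivity)
      nlinarith [sq_nonneg (J1 ν y), sq_nonneg (Jf ν y), Real.exp_pos (ν^2/y)]
    have hfin : |Jf ν y| ≤ Real.sqrt (Hf ν 1) := by
      rw [← Real.sqrt_sq_eq_abs]
      exact Real.sqrt_le_sqrt (le_trans hGf hH)
    exact le_trans hfin (le_max_right _ _)

end BJaux

namespace BJaux

lemma besselJ_eq {ν : ℝ} (hν : 0 ≤ ν) {y : ℝ} (hy : 0 ≤ y) :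
    besselJ ν y = (y/2)^ν * g ν ((y/2)^2) := by
  rw [besselJ, g, ← tsum_mul_left]
  apply tsum_congr
  intro k
  have key : (y/2) ^ (ν + 2*(k:ℝ)) = (y/2)^ν * ((y/2)^2)^k := by
    rcases eq_or_lt_of_le hy with h|h
    · rw [← h]
      simp only [show (0:ℝ)/2 = 0 by norm_num]
      rcases eq_or_lt_of_le hν with hν'|hν'
      · rw [← hν']
        cases k with
        | zero => norm_num
        | succ n =>
          rw [Real.zero_rpow (by push_cast; positivity)]
          simp [pow_succ]
      · rw [Real.zero_rpow (by positivity), Real.zero_rpow (ne_of_gt hν')]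
        ring
    · have h2 : (0:ℝ) < y/2 := by linarith
      rw [Real.rpow_add h2, show (2:ℝ)*(k:ℝ) = ((2*k : ℕ):ℝ) by push_cast; ring,
        Real.rpow_natCast, pow_mul]
  rw [c, key]
  ring

end BJaux

open BJaux in
theorem stmt3 (α b m : ℝ) (hα : 0 < α) (hb : 0 < b) (hm : 0 ≤ m) :
    ∃ C : ℝ, ∀ ω : ℝ, 1 ≤ ω → ∀ t ∈ Set.Icc (0 : ℝ) b,
      |∫ x in (0 : ℝ)..t, x ^ α * besselJ m (ω * x)| ≤ C / ω := by
  obtain ⟨B, hB0, hB⟩ := Jf_bounded (ν := m+1) (by linarith)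
  refine ⟨B * b^α + |α - m - 1| * (B * b^α) / α, ?_⟩
  intro ω hω t ht
  obtain ⟨ht0, htb⟩ := ht
  have hω0 : (0:ℝ) < ω := by linarith
  have hm1 : (0:ℝ) ≤ m + 1 := by linarith
  have ham : (0:ℝ) < α + m := by linarith
  have hIcc : Set.uIcc (0:ℝ) t = Set.Icc 0 t := uIcc_of_le ht0
  -- continuity facts
  have hrpc : ∀ p : ℝ, 0 ≤ p → Continuous (fun x : ℝ => x ^ p) := by
    intro p hp
    exact continuous_iff_continuousAt.mpr fun x =>
      Real.continuousAt_rpow_const x p (Or.inr hp)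
  have hcg : ∀ ν : ℝ, 0 ≤ ν → Continuous (fun x : ℝ => g ν ((ω*x/2)^2)) := by
    intro ν hν
    exact (continuous_g hν).comp (by continuity)
  -- Step A : rewrite the integrand
  have hInt1 : (∫ x in (0:ℝ)..t, x ^ α * besselJ m (ω * x))
      = (ω/2)^m * ∫ x in (0:ℝ)..t, x^(α+m) * g m ((ω*x/2)^2) := by
    rw [← intervalIntegral.integral_const_mul]
    apply intervalIntegral.integral_congr
    intro x hx
    rw [hIcc] at hx
    obtain ⟨hx0, hxt⟩ := hx
    have hyx : (0:ℝ) ≤ ω * x := by positivity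
    show x ^ α * besselJ m (ω * x) = (ω / 2) ^ m * (x ^ (α + m) * g m ((ω * x / 2) ^ 2))
    rw [besselJ_eq hm hyx]
    rcases eq_or_lt_of_le hx0 with h|h
    · rw [← h]
      simp only [mul_zero, zero_div, show ω * 0 = 0 by ring]
      rw [Real.zero_rpow (ne_of_gt hα), Real.zero_rpow (ne_of_gt ham)]
      simp
    · have e1 : (ω*x/2)^(m:ℝ) = (ω/2)^m * x^m := by
        rw [show ω*x/2 = (ω/2)*x by ring, Real.mul_rpow (by positivity) h.le]
      rw [show ω*x/2 = ω*x/2 from rfl, e1, Real.rpow_add h]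
      ring
  -- Step B : FTC
  have hD : ∀ x ∈ Set.uIcc (0:ℝ) t,
      HasDerivAt (fun x : ℝ => x^(α+m+1) * g (m+1) ((ω*x/2)^2))
        (x^(α+m) * (2 * g m ((ω*x/2)^2) + (α-m-1) * g (m+1) ((ω*x/2)^2))) x := by
    intro x hx
    rw [hIcc] at hx
    have hx0 : (0:ℝ) ≤ x := hx.1
    have hin : HasDerivAt (fun x : ℝ => (ω*x/2)^2) (2*(ω*x/2)*(ω/2)) x := by
      have heq : (fun x : ℝ => (ω*x/2)^2) = fun x : ℝ => (x^2) * (ω^2/4) := by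
        funext z; ring
      rw [heq]
      have h := (hasDerivAt_pow 2 x).mul_const (ω^2/4)
      refine h.congr_deriv (Eq.symm ?_)
      push_cast
      ring
    have hgg : HasDerivAt (fun x : ℝ => g (m+1) ((ω*x/2)^2))
        (gd (m+1) ((ω*x/2)^2) * (2*(ω*x/2)*(ω/2))) x :=
      (hasDerivAt_g hm1 _).comp x hin
    have hpw : HasDerivAt (fun x : ℝ => x^(α+m+1)) ((α+m+1) * x^(α+m+1-1)) x :=
      Real.hasDerivAt_rpow_const (Or.inr (by linarith))
    have e3 : α+m+1-1 = α+m := by ring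
    rw [e3] at hpw
    have h := hpw.mul hgg
    have e4 : x^(α+m+1) * x = x^(α+m) * x^2 := by
      rcases eq_or_lt_of_le hx0 with h0|h0
      · rw [← h0, Real.zero_rpow (by positivity : α+m+1 ≠ 0),
          Real.zero_rpow (ne_of_gt ham)]
        ring
      · rw [show α+m+1 = (α+m) + 1 by ring, Real.rpow_add_one (ne_of_gt h0)]
        ring
    have hrec := g_rec hm ((ω*x/2)^2)
    refine h.congr_deriv (Eq.symm ?_)
    linear_combination (-(2 * x^(α+m))) * hrec + (-(gd (m+1) ((ω*x/2)^2) * ω^2/2)) * e4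
  have hcont2 : Continuous (fun x : ℝ =>
      x^(α+m) * (2 * g m ((ω*x/2)^2) + (α-m-1) * g (m+1) ((ω*x/2)^2))) := by
    apply Continuous.mul (hrpc _ ham.le)
    apply Continuous.add
    · exact continuous_const.mul (hcg m hm)
    · exact continuous_const.mul (hcg (m+1) hm1)
  have hFTC := intervalIntegral.integral_eq_sub_of_hasDerivAt hD
    (hcont2.intervalIntegrable 0 t)
  have hPhi0 : (0:ℝ)^(α+m+1) * g (m+1) ((ω*0/2)^2) = 0 := by
    rw [Real.zero_rpow (by positivity : α+m+1 ≠ 0)]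
    ring
  rw [hPhi0, sub_zero] at hFTC
  -- Step C : split the integral
  have hi1 : IntervalIntegrable (fun x : ℝ => x^(α+m) * g m ((ω*x/2)^2)) volume 0 t :=
    ((hrpc _ ham.le).mul (hcg m hm)).intervalIntegrable 0 t
  have hi2 : IntervalIntegrable (fun x : ℝ => x^(α+m) * g (m+1) ((ω*x/2)^2)) volume 0 t :=
    ((hrpc _ ham.le).mul (hcg (m+1) hm1)).intervalIntegrable 0 t
  have hsplit : (∫ x in (0:ℝ)..t,
        x^(α+m) * (2 * g m ((ω*x/2)^2) + (α-m-1) * g (m+1) ((ω*x/2)^2)))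
      = 2 * (∫ x in (0:ℝ)..t, x^(α+m) * g m ((ω*x/2)^2))
        + (α-m-1) * ∫ x in (0:ℝ)..t, x^(α+m) * g (m+1) ((ω*x/2)^2) := by
    rw [← intervalIntegral.integral_const_mul, ← intervalIntegral.integral_const_mul,
      ← intervalIntegral.integral_add (hi1.const_mul 2) (hi2.const_mul (α-m-1))]
    apply intervalIntegral.integral_congr
    intro x _
    ring
  rw [hsplit] at hFTC
  set I1 := ∫ x in (0:ℝ)..t, x^(α+m) * g m ((ω*x/2)^2) with hI1
  set I2 := ∫ x in (0:ℝ)..t, x^(α+m) * g (m+1) ((ω*x/2)^2) with hI2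
  -- Step D : bounds
  have hwm : (0:ℝ) ≤ (ω/2)^(m:ℝ) := Real.rpow_nonneg (by positivity) m
  -- boundary term bound
  have hbd : (ω/2)^(m:ℝ) * |t^(α+m+1) * g (m+1) ((ω*t/2)^2)| ≤ 2 * t^α * B / ω := by
    rcases eq_or_lt_of_le ht0 with h0|h0
    · rw [← h0]
      rw [Real.zero_rpow (by positivity : α+m+1 ≠ 0)]
      simp only [zero_mul, abs_zero, mul_zero]
      rw [Real.zero_rpow (ne_of_gt hα)]
      positivity
    · have hJ := hB (ω*t) (by positivity)
      rw [Jf] at hJ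
      have e5 : (ω/2)^(m:ℝ) * (t^(α+m+1)) = (2/ω) * t^α * ((ω*t/2)^(m+1:ℝ)) := by
        rw [show ω*t/2 = (ω/2)*t by ring,
          Real.mul_rpow (by positivity) h0.le,
          show α+m+1 = α + (m+1) by ring, Real.rpow_add h0,
          Real.rpow_add_one (by positivity : (ω/2:ℝ) ≠ 0)]
        field_simp
      rw [abs_mul, abs_of_nonneg (Real.rpow_nonneg (by positivity) _), ← mul_assoc, e5]
      have e6 : (ω*t)/2 = ω*t/2 := rfl
      calc (2/ω) * t^α * ((ω*t/2)^(m+1:ℝ)) * |g (m+1) ((ω*t/2)^2)|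
          = (2/ω) * t^α * ((ω*t/2)^(m+1:ℝ) * |g (m+1) ((ω*t/2)^2)|) := by ring
        _ ≤ (2/ω) * t^α * B := by
            apply mul_le_mul_of_nonneg_left _ (by positivity)
            calc (ω*t/2)^(m+1:ℝ) * |g (m+1) ((ω*t/2)^2)|
                = |(ω*t/2)^(m+1:ℝ) * g (m+1) ((ω*t/2)^2)| := by
                  rw [abs_mul, abs_of_nonneg (Real.rpow_nonneg (by positivity) _)]
              _ ≤ B := hJ
        _ = 2 * t^α * B / ω := by ring
  -- integral term bound (pointwise)
  have hptw : ∀ x ∈ Set.Icc (0:ℝ) t,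
      |x^(α+m) * g (m+1) ((ω*x/2)^2)| ≤ ((2/ω)^(m+1:ℝ) * B) * x^(α-1) := by
    intro x hx
    obtain ⟨hx0, hxt⟩ := hx
    rcases eq_or_lt_of_le hx0 with h0|h0
    · rw [← h0]
      rw [Real.zero_rpow (ne_of_gt ham)]
      simp only [zero_mul, abs_zero]
      positivity
    · have hJ := hB (ω*x) (by positivity)
      rw [Jf] at hJ
      have e7 : x^(α+m) = x^(α-1) * x^(m+1:ℝ) := by
        rw [← Real.rpow_add h0]
        norm_num
      have e8 : x^(m+1:ℝ) = (2/ω)^(m+1:ℝ) * (ω*x/2)^(m+1:ℝ) := by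
        rw [← Real.mul_rpow (by positivity) (by positivity),
          show (2/ω) * (ω*x/2) = x by field_simp]
      rw [abs_mul, abs_of_nonneg (Real.rpow_nonneg hx0 _), e7, e8]
      have hJ' : ((ω*x)/2)^(m+1:ℝ) * |g (m+1) (((ω*x)/2)^2)| ≤ B := by
        calc ((ω*x)/2)^(m+1:ℝ) * |g (m+1) (((ω*x)/2)^2)|
            = |((ω*x)/2)^(m+1:ℝ) * g (m+1) (((ω*x)/2)^2)| := by
              rw [abs_mul, abs_of_nonneg (Real.rpow_nonneg (by positivity) _)]
          _ ≤ B := hJ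
      calc x^(α-1) * ((2/ω)^(m+1:ℝ) * (ω*x/2)^(m+1:ℝ)) * |g (m+1) ((ω*x/2)^2)|
          = ((2/ω)^(m+1:ℝ) * x^(α-1)) * ((ω*x/2)^(m+1:ℝ) * |g (m+1) ((ω*x/2)^2)|) := by
            ring
        _ ≤ ((2/ω)^(m+1:ℝ) * x^(α-1)) * B := by
            apply mul_le_mul_of_nonneg_left _ (by positivity)
            exact hJ'
        _ = ((2/ω)^(m+1:ℝ) * B) * x^(α-1) := by ring
  have hIb : |I2| ≤ ((2/ω)^(m+1:ℝ) * B) * (t^α / α) := by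
    calc |I2| ≤ ∫ x in (0:ℝ)..t, |x^(α+m) * g (m+1) ((ω*x/2)^2)| :=
          intervalIntegral.abs_integral_le_integral_abs ht0
      _ ≤ ∫ x in (0:ℝ)..t, ((2/ω)^(m+1:ℝ) * B) * x^(α-1) :=
          intervalIntegral.integral_mono_on ht0 hi2.abs
            ((intervalIntegrable_rpow' (by linarith)).const_mul _) hptw
      _ = ((2/ω)^(m+1:ℝ) * B) * (t^α / α) := by
          rw [intervalIntegral.integral_const_mul, integral_rpow (Or.inl (by linarith)),
            show α-1+1 = α by ring, Real.zero_rpow (ne_of_gt hα)]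
          ring
  -- combine
  have hprod : (ω/2)^(m:ℝ) * (2/ω)^(m+1:ℝ) = 2/ω := by
    rw [Real.rpow_add_one (by positivity : (2/ω:ℝ) ≠ 0), ← mul_assoc,
      ← Real.mul_rpow (by positivity) (by positivity),
      show (ω/2)*(2/ω) = 1 by field_simp, Real.one_rpow, one_mul]
  have h2' : |(ω/2)^(m:ℝ) * I2| ≤ 2*B*t^α/(α*ω) := by
    rw [abs_mul, abs_of_nonneg hwm]
    calc (ω/2)^(m:ℝ) * |I2| ≤ (ω/2)^(m:ℝ) * (((2/ω)^(m+1:ℝ) * B) * (t^α / α)) :=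
          mul_le_mul_of_nonneg_left hIb hwm
      _ = ((ω/2)^(m:ℝ) * (2/ω)^(m+1:ℝ)) * B * (t^α/α) := by ring
      _ = (2/ω) * B * (t^α/α) := by rw [hprod]
      _ = 2*B*t^α/(α*ω) := by field_simp
  have h1' : |(ω/2)^(m:ℝ) * (t^(α+m+1) * g (m+1) ((ω*t/2)^2))| ≤ 2 * t^α * B / ω := by
    rw [abs_mul, abs_of_nonneg hwm]
    exact hbd
  have hI1bd : |(ω/2)^(m:ℝ) * I1|
      ≤ (2*t^α*B/ω + |α-m-1| * (2*B*t^α/(α*ω)))/2 := by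
    have hEq : (ω/2)^(m:ℝ) * I1
        = ((ω/2)^(m:ℝ) * (t^(α+m+1) * g (m+1) ((ω*t/2)^2))
            - (α-m-1) * ((ω/2)^(m:ℝ) * I2)) / 2 := by
      have h := hFTC
      linear_combination ((ω/2)^(m:ℝ)/2) * h
    rw [hEq, abs_div, abs_of_pos (show (0:ℝ) < 2 by norm_num)]
    have hnum := calc |(ω/2)^(m:ℝ) * (t^(α+m+1) * g (m+1) ((ω*t/2)^2))
            - (α-m-1) * ((ω/2)^(m:ℝ) * I2)|
        ≤ |(ω/2)^(m:ℝ) * (t^(α+m+1) * g (m+1) ((ω*t/2)^2))|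
            + |(α-m-1) * ((ω/2)^(m:ℝ) * I2)| := abs_sub _ _
      _ ≤ 2*t^α*B/ω + |α-m-1| * (2*B*t^α/(α*ω)) := by
          apply add_le_add h1'
          rw [abs_mul]
          exact mul_le_mul_of_nonneg_left h2' (abs_nonneg _)
    linarith
  rw [hInt1]
  have htb' : t^α ≤ b^α := Real.rpow_le_rpow ht0 htb hα.le
  have ht' : (0:ℝ) ≤ t^α := Real.rpow_nonneg ht0 α
  calc |(ω/2)^(m:ℝ) * I1| ≤ (2*t^α*B/ω + |α-m-1| * (2*B*t^α/(α*ω)))/2 := hI1bd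
    _ = t^α*B/ω + |α-m-1| * B * t^α/(α*ω) := by ring
    _ ≤ b^α*B/ω + |α-m-1| * B * b^α/(α*ω) := by
        have hbB : t^α*B ≤ b^α*B := mul_le_mul_of_nonneg_right htb' hB0
        have hbB2 : |α-m-1| * B * t^α ≤ |α-m-1| * B * b^α := by
          apply mul_le_mul_of_nonneg_left htb'
          positivity
        apply add_le_add
        · exact div_le_div_of_nonneg_right hbB hω0.le
        · exact div_le_div_of_nonneg_right hbB2 (by positivity)
    _ = (B * b^α + |α - m - 1| * (B * b^α) / α) / ω := by
        field_simp
end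

section
/- Let g ∈ C³[0,b] satisfy g(0) = 0. Then for all x ∈ (0,b], |d²/dx² ( g(x)/x )| ≤ (7/3) · sup_{t∈[0,b]} |g'''(t)|. -/
open MeasureTheory intervalIntegral Real Set Polynomial

private lemma idw_congr_set {f : ℝ → ℝ} {s t : Set ℝ} {y : ℝ} (h : s =ᶠ[nhds y] t) (n : ℕ) :
    iteratedDerivWithin n f s y = iteratedDerivWithin n f t y := by
  simp only [iteratedDerivWithin, iteratedFDerivWithin_congr_set h]

private lemma icc_eq_icc {x b : ℝ} (hxb : x ≤ b) {y : ℝ} (hy : y < x) :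
    Set.Icc (0:ℝ) x =ᶠ[nhds y] Set.Icc (0:ℝ) b := by
  filter_upwards [Iio_mem_nhds hy] with z hz
  simp only [Set.mem_Iio] at hz
  simp only [Set.mem_Icc, eq_iff_iff]
  exact ⟨fun ⟨h1, _⟩ => ⟨h1, hz.le.trans hxb⟩, fun ⟨h1, _⟩ => ⟨h1, hz.le⟩⟩

private lemma taylor_mean_remainder_lagrange_Icc {f : ℝ → ℝ} {x x₀ : ℝ} {n : ℕ} (hx : x₀ < x)
    (hf : ContDiffOn ℝ n f (Icc x₀ x))
    (hf' : DifferentiableOn ℝ (iteratedDerivWithin n f (Icc x₀ x)) (Ioo x₀ x)) :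
    ∃ x' ∈ Ioo x₀ x, f x - taylorWithinEval f n (Icc x₀ x) x₀ x =
      iteratedDerivWithin (n + 1) f (Icc x₀ x) x' * (x - x₀) ^ (n + 1) / Nat.factorial (n + 1) := by
  have h := taylor_mean_remainder_lagrange (f := f) (n := n) hx.ne
    (by rwa [uIcc_of_le hx.le]) (by rwa [uIcc_of_le hx.le, uIoo_of_le hx.le])
  simpa only [uIcc_of_le hx.le, uIoo_of_le hx.le] using h

theorem stmt7 (g : ℝ → ℝ) (b : ℝ) (hb : 0 < b)
    (hg : ContDiffOn ℝ 3 g (Set.Icc (0 : ℝ) b)) (hg0 : g 0 = 0) :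
    ∀ x ∈ Set.Ioc (0 : ℝ) b,
      |iteratedDerivWithin 2 (fun y => g y / y) (Set.Icc (0 : ℝ) b) x| ≤
        (7 / 3) * sSup ((fun t => |iteratedDerivWithin 3 g (Set.Icc (0 : ℝ) b) t|) ''
          Set.Icc (0 : ℝ) b) := by
  intro x hx
  obtain ⟨hx0, hxb⟩ := hx
  have hxne : x ≠ 0 := ne_of_gt hx0
  set s : Set ℝ := Set.Icc (0 : ℝ) b with hs
  have uds : UniqueDiffOn ℝ s := uniqueDiffOn_Icc hb
  set g1 : ℝ → ℝ := derivWithin g s with hg1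
  set g2 : ℝ → ℝ := iteratedDerivWithin 2 g s with hg2
  set g3 : ℝ → ℝ := iteratedDerivWithin 3 g s with hg3
  set M : ℝ := sSup ((fun t => |g3 t|) '' s) with hM
  have h0s : (0 : ℝ) ∈ s := Set.left_mem_Icc.2 hb.le
  have hxs : x ∈ s := ⟨hx0.le, hxb⟩
  have hsub : Set.Icc (0:ℝ) x ⊆ s := Set.Icc_subset_Icc_right hxb
  have hIoosub : Set.Ioo (0:ℝ) x ⊆ s := fun y hy => ⟨hy.1.le, hy.2.le.trans hxb⟩
  -- bound on g3
  have hg3cont : ContinuousOn g3 s :=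
    hg.continuousOn_iteratedDerivWithin (by norm_num) uds
  have hbdd : BddAbove ((fun t => |g3 t|) '' s) :=
    (isCompact_Icc.image_of_continuousOn hg3cont.abs).bddAbove
  have hg3M : ∀ t ∈ s, |g3 t| ≤ M := fun t ht => le_csSup hbdd ⟨t, ht, rfl⟩
  -- shifting lemmas
  have hshift1 : ∀ (n : ℕ) (y : ℝ), y ∈ s →
      iteratedDerivWithin n g1 s y = iteratedDerivWithin (n+1) g s y := by
    intro n y hy
    rw [iteratedDerivWithin_succ']
  have h1eq : ∀ y ∈ s, derivWithin g s y = g1 y := fun y hy => rfl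
  have h2eq : ∀ y ∈ s, derivWithin g1 s y = g2 y := by
    intro y hy
    rw [hg2, iteratedDerivWithin_succ', iteratedDerivWithin_one]
  have h3eq : ∀ y ∈ s, derivWithin g2 s y = g3 y := fun y hy =>
    (congrFun (iteratedDerivWithin_succ (n := 2) (f := g) (s := s)) y).symm
  -- contDiff facts
  have hg1cd : ContDiffOn ℝ 2 g1 s := hg.derivWithin uds (by norm_num)
  have hg2cd : ContDiffOn ℝ 1 g2 s := by
    have h : ContDiffOn ℝ 1 (derivWithin g1 s) s := hg1cd.derivWithin uds (by norm_num)
    exact h.congr fun y hy => (h2eq y hy).symm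
  have hgdiff : DifferentiableOn ℝ g s := hg.differentiableOn (by norm_num)
  have hg1diff : DifferentiableOn ℝ g1 s := hg1cd.differentiableOn (by norm_num)
  have hg2diff : DifferentiableOn ℝ g2 s := hg2cd.differentiableOn one_ne_zero
  have hgd : ∀ y ∈ s, HasDerivWithinAt g (g1 y) s y := fun y hy =>
    (hgdiff y hy).hasDerivWithinAt
  have hg1d : ∀ y ∈ s, HasDerivWithinAt g1 (g2 y) s y := by
    intro y hy
    rw [← h2eq y hy]
    exact (hg1diff y hy).hasDerivWithinAt
  -- congr-set transfer
  have hset : ∀ (f : ℝ → ℝ) (n : ℕ) (y : ℝ), y < x →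
      iteratedDerivWithin n f (Set.Icc 0 x) y = iteratedDerivWithin n f s y :=
    fun f n y hy => idw_congr_set (icc_eq_icc hxb hy) n
  -- Taylor order 0 for g2
  obtain ⟨c3, hc3, hT0⟩ := taylor_mean_remainder_lagrange_Icc (f := g2) (n := 0) hx0
    ((hg2cd.mono hsub).of_le (by norm_num))
    (by
      apply (hg2diff.mono hIoosub).congr
      intro y hy
      simp [iteratedDerivWithin_zero])
  have E0 : g2 x = g2 0 + g3 c3 * x := by
    rw [taylor_within_zero_eval] at hT0
    rw [hset g2 1 c3 hc3.2, iteratedDerivWithin_one,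
      h3eq c3 (hIoosub hc3)] at hT0
    have : g2 x - g2 0 = g3 c3 * x := by
      rw [hT0]; norm_num
    linarith
  -- Taylor order 1 for g1
  obtain ⟨c2, hc2, hT1⟩ := taylor_mean_remainder_lagrange_Icc (f := g1) (n := 1) hx0
    ((hg1cd.mono hsub).of_le (by norm_num))
    (by
      apply (hg2diff.mono hIoosub).congr
      intro y hy
      rw [hset g1 1 y hy.2, iteratedDerivWithin_one,
        h2eq y (hIoosub hy)])
  have E1 : g1 x = g1 0 + g2 0 * x + g3 c2 * x ^ 2 / 2 := by
    rw [taylor_within_apply] at hT1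
    rw [hset g1 2 c2 hc2.2, hshift1 2 c2 (hIoosub hc2), ← hg3] at hT1
    simp only [Finset.sum_range_succ, Finset.sum_range_zero] at hT1
    rw [hset g1 1 0 hx0, iteratedDerivWithin_one, h2eq 0 h0s] at hT1
    simp only [iteratedDerivWithin_zero] at hT1
    simp only [Nat.factorial] at hT1
    push_cast at hT1
    norm_num at hT1
    linarith [hT1]
  -- Taylor order 2 for g
  obtain ⟨c1, hc1, hT2⟩ := taylor_mean_remainder_lagrange_Icc (f := g) (n := 2) hx0
    ((hg.mono hsub).of_le (by norm_num))
    (by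
      apply (hg2diff.mono hIoosub).congr
      intro y hy
      rw [hset g 2 y hy.2, ← hg2])
  have E2 : g x = g1 0 * x + g2 0 * x ^ 2 / 2 + g3 c1 * x ^ 3 / 6 := by
    rw [taylor_within_apply] at hT2
    rw [hset g 3 c1 hc1.2, ← hg3] at hT2
    simp only [Finset.sum_range_succ, Finset.sum_range_zero] at hT2
    rw [hset g 1 0 hx0, iteratedDerivWithin_one, h1eq 0 h0s,
      hset g 2 0 hx0, ← hg2] at hT2
    simp only [iteratedDerivWithin_zero, hg0] at hT2
    simp only [Nat.factorial] at hT2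
    push_cast at hT2
    norm_num at hT2
    linarith [hT2]
  -- compute the second derivative of g y / y at x
  have hderiv1 : ∀ y ∈ Set.Ioc (0:ℝ) b,
      derivWithin (fun z => g z / z) s y = (g1 y * y - g y) / y ^ 2 := by
    intro y hy
    have hys : y ∈ s := ⟨hy.1.le, hy.2⟩
    have h : HasDerivWithinAt (fun z => g z / z) _ s y := (hgd y hys).div (hasDerivWithinAt_id y s) (ne_of_gt hy.1)
    have := h.derivWithin (uds y hys)
    simpa [mul_one, id] using this
  have key : iteratedDerivWithin 2 (fun y => g y / y) s x
      = (g2 x * x ^ 2 - 2 * x * g1 x + 2 * g x) / x ^ 3 := by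
    rw [iteratedDerivWithin_succ]
    have h1 : derivWithin (iteratedDerivWithin 1 (fun y => g y / y) s) s x
        = derivWithin (fun y => (g1 y * y - g y) / y ^ 2) s x := by
      apply Filter.EventuallyEq.derivWithin_eq
      · have hmem : Set.Ioi (0:ℝ) ∈ nhdsWithin x s :=
          nhdsWithin_le_nhds (Ioi_mem_nhds hx0)
        filter_upwards [hmem, self_mem_nhdsWithin] with y hy hys
        rw [iteratedDerivWithin_one, hderiv1 y ⟨hy, hys.2⟩]
      · rw [iteratedDerivWithin_one, hderiv1 x ⟨hx0, hxb⟩]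
    rw [h1]
    have hnum : HasDerivWithinAt (fun y => g1 y * y - g y)
        (g2 x * x + g1 x * 1 - g1 x) s x :=
      ((hg1d x hxs).mul (hasDerivWithinAt_id x s)).sub (hgd x hxs)
    have hden : HasDerivWithinAt (fun y : ℝ => y ^ 2) (2 * x ^ 1) s x := by
      have h0 : HasDerivWithinAt (fun y : ℝ => y ^ 2) _ s x := (hasDerivWithinAt_id x s).pow 2
      simpa using h0
    have h : HasDerivWithinAt (fun y => (g1 y * y - g y) / y ^ 2) _ s x := hnum.div hden (by positivity)
    rw [h.derivWithin (uds x hxs)]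
    field_simp
    ring
  rw [key]
  have hx3 : (0:ℝ) < x ^ 3 := by positivity
  have hval : (g2 x * x ^ 2 - 2 * x * g1 x + 2 * g x) / x ^ 3
      = g3 c3 - g3 c2 + g3 c1 / 3 := by
    rw [E0, E1, E2]
    field_simp
    ring
  rw [hval]
  have b1 := hg3M c3 (hIoosub hc3)
  have b2 := hg3M c2 (hIoosub hc2)
  have b3 := hg3M c1 (hIoosub hc1)
  calc |g3 c3 - g3 c2 + g3 c1 / 3| ≤ |g3 c3| + |g3 c2| + |g3 c1| / 3 := by
        have := abs_add_le (g3 c3 - g3 c2) (g3 c1 / 3)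
        have h2 := abs_sub (g3 c3) (g3 c2)
        rw [abs_div] at this
        simp only [abs_of_pos (by norm_num : (0:ℝ) < 3)] at this
        calc |g3 c3 - g3 c2 + g3 c1 / 3| ≤ |g3 c3 - g3 c2| + |g3 c1| / 3 := this
          _ ≤ |g3 c3| + |g3 c2| + |g3 c1| / 3 := by
              have := abs_sub_abs_le_abs_sub (g3 c3) (g3 c2)
              have h3 : |g3 c3 - g3 c2| ≤ |g3 c3| + |g3 c2| := abs_sub _ _
              linarith
    _ ≤ M + M + M / 3 := by
        have : |g3 c1| / 3 ≤ M / 3 := by linarith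
        linarith
    _ = 7 / 3 * M := by ring
end
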